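/- arXiv:1102.4023 — 3 statements merged into one kernel-verified Lean document; each statement's English description precedes it below -/
import Mathlib

section
/- Let Θ₁ : A* → A* be an involutive antimorphism on the free monoid over a finite alphabet A, and let u ∈ A^ℕ be a recurrent infinite word with finite Θ₁-palindromic defect (i.e., u is almost Θ₁-rich). Then there exist a finite alphabet B, an involutive antimorphism Θ₂ : B* → B*, a monoid morphism φ : B* → A*, and a recurrent infinite word v ∈ B^ℕ such that u = φ(v) and v is Θ₂-rich. -/
/-!
Basic notions from combinatorics on words: involutive antimorphisms,
Θ-palindromes, factors of infinite words, palindromic defect, richness.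
-/

/-- `Θ` is an involutive antimorphism of the free monoid `A*` (words as lists). -/
def IsAntimorphism {A : Type*} (Θ : List A → List A) : Prop :=
  (∀ x y : List A, Θ (x ++ y) = Θ y ++ Θ x) ∧ ∀ x : List A, Θ (Θ x) = x

/-- The factor `u_i u_{i+1} … u_{i+n-1}` of the infinite word `u`. -/
def factorAt {A : Type*} (u : ℕ → A) (i n : ℕ) : List A :=
  (List.range n).map fun k => u (i + k)

/-- `i` is an occurrence of `w` in the infinite word `u`. -/
def OccursAt {A : Type*} (u : ℕ → A) (w : List A) (i : ℕ) : Prop :=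
  w = factorAt u i w.length

/-- `w` is a factor of the infinite word `u`. -/
def IsFactorOf {A : Type*} (w : List A) (u : ℕ → A) : Prop :=
  ∃ i, OccursAt u w i

/-- The prefix of length `n` of the infinite word `u`. -/
def prefixWord {A : Type*} (u : ℕ → A) (n : ℕ) : List A :=
  factorAt u 0 n

/-- `u` is recurrent: every factor has infinitely many occurrences. -/
def Recurrent {A : Type*} (u : ℕ → A) : Prop :=
  ∀ w, IsFactorOf w u → ∀ N, ∃ i, N ≤ i ∧ OccursAt u w i

/-- `u` is uniformly recurrent: every factor occurs with bounded gaps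
(equivalently, every factor has finitely many return words). -/
def UniformlyRecurrent {A : Type*} (u : ℕ → A) : Prop :=
  ∀ w, IsFactorOf w u → ∃ R, ∀ N, ∃ i, N ≤ i ∧ i < N + R ∧ OccursAt u w i

/-- `i` is an occurrence of the word `s` in the finite word `r`. -/
def OccursIn {A : Type*} (s r : List A) (i : ℕ) : Prop :=
  i + s.length ≤ r.length ∧ s = (r.drop i).take s.length

/-- `s` occurs exactly once in `r`. -/
def Unioccurrent {A : Type*} (s r : List A) : Prop :=
  Set.ncard {i | OccursIn s r i} = 1

/-- The set `Pal_Θ(w)` of `Θ`-palindromic factors of the finite word `w`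
(the empty word included). -/
def palSet {A : Type*} (Θ : List A → List A) (w : List A) : Set (List A) :=
  {p | p <:+: w ∧ Θ p = p}

/-- `γ_Θ(w)`: the number of pairs `{a, Θ(a)}` where `a` is a letter occurring
in `w` with `a ≠ Θ(a)`. -/
noncomputable def gammaTheta {A : Type*} (Θ : List A → List A) (w : List A) : ℕ :=
  Set.ncard {P : Set A | ∃ a, a ∈ w ∧ Θ [a] ≠ [a] ∧ P = {b | [b] = [a] ∨ [b] = Θ [a]}}

/-- The `Θ`-palindromic defect `D_Θ(w) = |w| + 1 - γ_Θ(w) - #Pal_Θ(w)` of a finite word. -/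
noncomputable def defect {A : Type*} (Θ : List A → List A) (w : List A) : ℤ :=
  (w.length : ℤ) + 1 - gammaTheta Θ w - (palSet Θ w).ncard

/-- The infinite word `u` has finite `Θ`-palindromic defect
(`D_Θ(u) = sup { D_Θ(w) : w factor of u } < ∞`), i.e. `u` is almost `Θ`-rich. -/
def FiniteDefect {A : Type*} (Θ : List A → List A) (u : ℕ → A) : Prop :=
  ∃ C : ℤ, ∀ w, IsFactorOf w u → defect Θ w ≤ C

/-- The infinite word `u` is `Θ`-rich: every factor `w` satisfies
`#Pal_Θ(w) = |w| + 1 - γ_Θ(w)`, i.e. has zero `Θ`-defect. -/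
def RichWord {A : Type*} (Θ : List A → List A) (u : ℕ → A) : Prop :=
  ∀ w, IsFactorOf w u → defect Θ w = 0

/-- The language of `u` is closed under `Θ`. -/
def LangClosedUnder {A : Type*} (Θ : List A → List A) (u : ℕ → A) : Prop :=
  ∀ w, IsFactorOf w u → IsFactorOf (Θ w) u

/-- `u` is the image of the infinite word `v` under the monoid morphism
`B* → A*` determined by `φ` on letters, i.e. `u = φ(v₀)φ(v₁)φ(v₂)…`. -/
def IsMorphicImage {A B : Type*} (u : ℕ → A) (φ : B → List A) (v : ℕ → B) : Prop :=
  (∀ n, OccursAt u ((prefixWord v n).flatMap φ) 0) ∧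
    ∀ N, ∃ n, N ≤ ((prefixWord v n).flatMap φ).length

/-- The occurrences of `w` and `w'` in `u` alternate: listing in increasing order
all occurrences of `w` or `w'`, consecutive indices are alternately occurrences
of `w` and of `w'` (between two occurrences of one of them, the second of which is
not an occurrence of the other, there is an occurrence of the other). -/
def AlternateIn {A : Type*} (u : ℕ → A) (w w' : List A) : Prop :=
  (∀ i j, i < j → OccursAt u w i → OccursAt u w j → ¬ OccursAt u w' j →
    ∃ k, i < k ∧ k < j ∧ OccursAt u w' k) ∧
  (∀ i j, i < j → OccursAt u w' i → OccursAt u w' j → ¬ OccursAt u w j →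
    ∃ k, i < k ∧ k < j ∧ OccursAt u w k)

/-- Factor complexity `C(n)` of the infinite word `u`. -/
noncomputable def complexity {A : Type*} (u : ℕ → A) (n : ℕ) : ℕ :=
  Set.ncard {w : List A | IsFactorOf w u ∧ w.length = n}

/-- `Θ`-palindromic complexity `P_Θ(n)` of the infinite word `u`. -/
noncomputable def palComplexity {A : Type*} (Θ : List A → List A) (u : ℕ → A) (n : ℕ) : ℕ :=
  Set.ncard {w : List A | IsFactorOf w u ∧ w.length = n ∧ Θ w = w}

/-- `r` is a complete return word of `w` in `u`: a factor of `u` with exactly two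
occurrences of `w`, one as a prefix and one as a suffix. -/
def IsCompleteReturnWord {A : Type*} (u : ℕ → A) (w r : List A) : Prop :=
  IsFactorOf r u ∧ w <+: r ∧ w <:+ r ∧ Set.ncard {i | OccursIn w r i} = 2

namespace RichAux

variable {A : Type*} {Θ : List A → List A}

/-- the set of letter-pairs counted by `gammaTheta` -/
def pairSet (Θ : List A → List A) (w : List A) : Set (Set A) :=
  {P : Set A | ∃ a, a ∈ w ∧ Θ [a] ≠ [a] ∧ P = {b | [b] = [a] ∨ [b] = Θ [a]}}

lemma gammaTheta_eq (Θ : List A → List A) (w : List A) :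
    gammaTheta Θ w = (pairSet Θ w).ncard := rfl

section Anti

variable (hΘ : IsAntimorphism Θ)
include hΘ

lemma theta_nil : Θ [] = [] := by
  have h := hΘ.1 [] []
  have hl := congrArg List.length h
  simp at hl
  exact hl

lemma exists_letter (a : A) : ∃ b, Θ [a] = [b] := by
  rcases x : Θ [a] with _ | ⟨c, t⟩
  · exfalso
    have := hΘ.2 [a]
    rw [x, theta_nil hΘ] at this
    simp at this
  · rcases t with _ | ⟨d, t'⟩
    · exact ⟨c, rfl⟩
    · exfalso
      have h2 := hΘ.2 [a]
      rw [x] at h2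
      have : Θ (c :: d :: t') = Θ (d :: t') ++ Θ [c] := by
        have := hΘ.1 [c] (d :: t'); simpa using this
      rw [this] at h2
      have hl := congrArg List.length h2
      simp at hl
      have hc : Θ [c] ≠ [] := by
        intro hh
        have := hΘ.2 [c]; rw [hh, theta_nil hΘ] at this; simp at this
      have hd : Θ (d :: t') ≠ [] := by
        intro hh
        have := hΘ.2 (d :: t'); rw [hh, theta_nil hΘ] at this; simp at this
      have : 1 ≤ (Θ [c]).length := List.length_pos_iff.mpr hc
      have : 1 ≤ (Θ (d :: t')).length := List.length_pos_iff.mpr hd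
      omega

/-- the letter involution underlying `Θ` -/
noncomputable def th (a : A) : A := (exists_letter hΘ a).choose

lemma th_spec (a : A) : Θ [a] = [th hΘ a] := (exists_letter hΘ a).choose_spec

lemma theta_eq (w : List A) : Θ w = w.reverse.map (th hΘ) := by
  induction w with
  | nil => simpa using theta_nil hΘ
  | cons a t ih =>
    have : Θ (a :: t) = Θ t ++ Θ [a] := by
      have := hΘ.1 [a] t; simpa using this
    rw [this, ih, th_spec hΘ]
    simp

lemma th_invol (a : A) : th hΘ (th hΘ a) = a := by
  have := hΘ.2 [a]
  rw [th_spec hΘ, th_spec hΘ] at this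
  exact List.singleton_inj.mp this

lemma length_theta (w : List A) : (Θ w).length = w.length := by
  rw [theta_eq hΘ]; simp

lemma theta_infix {p w : List A} (h : p <:+: w) : Θ p <:+: Θ w := by
  rw [theta_eq hΘ, theta_eq hΘ]
  exact (List.reverse_infix.mpr h).map _

lemma theta_suffix_prefix {p w : List A} (h : p <:+ w) : Θ p <+: Θ w := by
  rw [theta_eq hΘ, theta_eq hΘ]
  exact (List.reverse_prefix.mpr h).map _

lemma theta_prefix_suffix {p w : List A} (h : p <+: w) : Θ p <:+ Θ w := by
  rw [theta_eq hΘ, theta_eq hΘ]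
  exact (List.reverse_suffix.mpr h).map _

end Anti

end RichAux
namespace RichAux

variable {A : Type*} {Θ : List A → List A}

lemma infix_set_finite (w : List A) : {p : List A | p <:+: w}.Finite := by
  apply Set.Finite.subset (List.finite_toSet (w.tails.flatMap List.inits))
  intro p hp
  rcases List.infix_iff_prefix_suffix.mp hp with ⟨t, h1, h2⟩
  simp only [List.coe_toFinset, Set.mem_setOf_eq, List.mem_flatMap, List.mem_tails,
    List.mem_inits, List.mem_toFinset]
  exact ⟨t, h2, h1⟩

lemma palSet_finite (Θ : List A → List A) (w : List A) : (palSet Θ w).Finite :=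
  (infix_set_finite w).subset fun _ hp => hp.1

/-- the pair associated to a letter -/
def pairOf (Θ : List A → List A) (a : A) : Set A := {b | [b] = [a] ∨ [b] = Θ [a]}

lemma pairSet_finite (Θ : List A → List A) (w : List A) : (pairSet Θ w).Finite := by
  apply Set.Finite.subset ((w.finite_toSet).image (pairOf Θ))
  rintro P ⟨a, ha, _, rfl⟩
  exact ⟨a, ha, rfl⟩

lemma palSet_mono {w w' : List A} (h : w <:+: w') : palSet Θ w ⊆ palSet Θ w' :=
  fun _ hp => ⟨hp.1.trans h, hp.2⟩

lemma pairSet_mono {w w' : List A} (h : w <:+: w') : pairSet Θ w ⊆ pairSet Θ w' := by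
  rintro P ⟨a, ha, hne, rfl⟩
  exact ⟨a, h.subset ha, hne, rfl⟩

lemma subsingleton_ncard_le_one {α : Type*} {s : Set α} (h : s.Subsingleton) :
    s.ncard ≤ 1 := by
  rcases h.eq_empty_or_singleton with rfl | ⟨a, rfl⟩ <;> simp

lemma infix_concat_cases {p w : List A} {c : A} (h : p <:+: w ++ [c]) :
    p <:+: w ∨ p <:+ (w ++ [c]) := by
  obtain ⟨x, t, hxt⟩ := h
  rcases t.eq_nil_or_concat with rfl | ⟨t', d, rfl⟩
  · right; exact ⟨x, by simpa using hxt⟩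
  · left
    have h3 : (x ++ p ++ t').concat d = w.concat c := by
      simp only [List.concat_eq_append, List.append_assoc] at hxt ⊢
      simpa [List.append_assoc] using hxt
    obtain ⟨h4, -⟩ := List.concat_inj.mp h3
    exact ⟨x, t', by simpa [List.append_assoc] using h4⟩

section Anti

variable (hΘ : IsAntimorphism Θ)
include hΘ

lemma nil_mem_palSet (w : List A) : [] ∈ palSet Θ w := ⟨List.nil_infix, theta_nil hΘ⟩

lemma newPal_suffix {w : List A} {c : A} {p : List A}
    (hp : p ∈ palSet Θ (w ++ [c]) \ palSet Θ w) : p <:+ (w ++ [c]) := by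
  rcases infix_concat_cases hp.1.1 with h | h
  · exact absurd ⟨h, hp.1.2⟩ hp.2
  · exact h

lemma newPal_subsingleton (w : List A) (c : A) :
    ((palSet Θ (w ++ [c])) \ palSet Θ w).Subsingleton := by
  have key : ∀ p ∈ palSet Θ (w ++ [c]) \ palSet Θ w,
      ∀ q ∈ palSet Θ (w ++ [c]) \ palSet Θ w, p.length ≤ q.length → p = q := by
    intro p hp q hq hlen
    have hps := newPal_suffix hΘ hp
    have hqs := newPal_suffix hΘ hq
    have hpq : p <:+ q := List.suffix_of_suffix_length_le hps hqs hlen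
    by_contra hne
    have hlt : p.length < q.length := by
      rcases Nat.lt_or_ge p.length q.length with h | h
      · exact h
      · exact absurd (hpq.eq_of_length_le h) hne
    have hppre : p <+: q := by
      have := theta_suffix_prefix hΘ hpq
      rwa [hp.1.2, hq.1.2] at this
    obtain ⟨r, hr⟩ := hppre
    have hrne : r ≠ [] := by
      intro h; rw [h] at hr; simp at hr; exact hne hr
    obtain ⟨y, hy⟩ := hqs
    rcases r.eq_nil_or_concat with rfl | ⟨r', d, rfl⟩
    · exact hrne rfl
    · have h3 : (y ++ p ++ r').concat d = w.concat c := by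
        simp only [List.concat_eq_append, List.append_assoc] at hy ⊢
        rw [← hr] at hy
        simpa [List.append_assoc] using hy
      obtain ⟨h4, -⟩ := List.concat_inj.mp h3
      exact hp.2 ⟨⟨y, r', by simpa [List.append_assoc] using h4⟩, hp.1.2⟩
  intro p hp q hq
  rcases Nat.le_total p.length q.length with h | h
  · exact key p hp q hq h
  · exact (key q hq p hp h).symm

lemma newPair_elim {w : List A} {c : A} {P : Set A}
    (hP : P ∈ pairSet Θ (w ++ [c]) \ pairSet Θ w) :
    Θ [c] ≠ [c] ∧ c ∉ w ∧ th hΘ c ∉ w ∧ P = pairOf Θ c := by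
  obtain ⟨a, ha, hane, hPa⟩ := hP.1
  have hac : a = c := by
    rcases List.mem_append.mp ha with h | h
    · exact absurd ⟨a, h, hane, hPa⟩ hP.2
    · simpa using h
  subst hac
  refine ⟨hane, ?_, ?_, hPa⟩
  · intro hc
    exact hP.2 ⟨a, hc, hane, hPa⟩
  · intro hc
    apply hP.2
    refine ⟨th hΘ a, hc, ?_, ?_⟩
    · rw [th_spec hΘ, th_invol hΘ]
      intro h
      exact hane (by rw [th_spec hΘ, ← List.singleton_inj.mp h])
    · rw [hPa, th_spec hΘ, th_spec hΘ, th_invol hΘ]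
      ext b
      simp only [pairOf, Set.mem_setOf_eq]
      tauto

lemma newPal_empty_of_newPair {w : List A} {c : A}
    (hne : (pairSet Θ (w ++ [c]) \ pairSet Θ w).Nonempty) :
    palSet Θ (w ++ [c]) \ palSet Θ w = ∅ := by
  obtain ⟨P, hP⟩ := hne
  obtain ⟨hcne, hcw, hthw, -⟩ := newPair_elim hΘ hP
  ext p
  simp only [Set.mem_empty_iff_false, iff_false]
  intro hp
  have hps := newPal_suffix hΘ hp
  have hpne : p ≠ [] := by
    intro h; rw [h] at hp; exact hp.2 (nil_mem_palSet hΘ w)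
  rcases p.eq_nil_or_concat with rfl | ⟨p', d, rfl⟩
  · exact hpne rfl
  · obtain ⟨y, hy⟩ := hps
    have h3 : (y ++ p').concat d = w.concat c := by
      simp only [List.concat_eq_append, List.append_assoc] at hy ⊢
      simpa [List.append_assoc] using hy
    obtain ⟨h4, rfl⟩ := List.concat_inj.mp h3
    -- p = p' ++ [d], pal
    have hpal := hp.1.2
    have hth : Θ (p' ++ [d]) = Θ [d] ++ Θ p' := by
      rw [hΘ.1]
    rw [List.concat_eq_append] at hpal
    rw [hth, th_spec hΘ] at hpal
    rcases p' with _ | ⟨e, p''⟩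
    · simp at hpal
      exact hcne (by rw [th_spec hΘ, hpal.1])
    · have h5 := congrArg List.head? hpal
      simp at h5
      subst h5
      apply hthw
      rw [← h4]
      simp

lemma step_le (w : List A) (c : A) :
    (palSet Θ (w ++ [c])).ncard + (pairSet Θ (w ++ [c])).ncard ≤
      (palSet Θ w).ncard + (pairSet Θ w).ncard + 1 := by
  have hsub1 : palSet Θ w ⊆ palSet Θ (w ++ [c]) := palSet_mono ⟨[], [c], by simp⟩
  have hsub2 : pairSet Θ w ⊆ pairSet Θ (w ++ [c]) := pairSet_mono ⟨[], [c], by simp⟩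
  have hu1 : palSet Θ (w ++ [c]) = palSet Θ w ∪ (palSet Θ (w ++ [c]) \ palSet Θ w) :=
    (Set.union_diff_cancel hsub1).symm
  have hu2 : pairSet Θ (w ++ [c]) = pairSet Θ w ∪ (pairSet Θ (w ++ [c]) \ pairSet Θ w) :=
    (Set.union_diff_cancel hsub2).symm
  have h1 : (palSet Θ (w ++ [c])).ncard ≤
      (palSet Θ w).ncard + (palSet Θ (w ++ [c]) \ palSet Θ w).ncard := by
    conv_lhs => rw [hu1]
    exact Set.ncard_union_le _ _
  have h2 : (pairSet Θ (w ++ [c])).ncard ≤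
      (pairSet Θ w).ncard + (pairSet Θ (w ++ [c]) \ pairSet Θ w).ncard := by
    conv_lhs => rw [hu2]
    exact Set.ncard_union_le _ _
  rcases Set.eq_empty_or_nonempty (pairSet Θ (w ++ [c]) \ pairSet Θ w) with he | hne
  · have h3 : (pairSet Θ (w ++ [c]) \ pairSet Θ w).ncard = 0 := by rw [he]; simp
    have h4 := subsingleton_ncard_le_one (newPal_subsingleton hΘ w c)
    omega
  · have h3 : (palSet Θ (w ++ [c]) \ palSet Θ w).ncard = 0 := by
      rw [newPal_empty_of_newPair hΘ hne]; simp
    have hss : (pairSet Θ (w ++ [c]) \ pairSet Θ w).Subsingleton := by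
      intro P hP Q hQ
      rw [(newPair_elim hΘ hP).2.2.2, (newPair_elim hΘ hQ).2.2.2]
    have h4 := subsingleton_ncard_le_one hss
    omega

end Anti

end RichAux
namespace RichAux

variable {A : Type*} {Θ : List A → List A}

lemma defect_def (Θ : List A → List A) (w : List A) :
    defect Θ w = (w.length : ℤ) + 1 - (pairSet Θ w).ncard - (palSet Θ w).ncard := rfl

section Anti

variable (hΘ : IsAntimorphism Θ)
include hΘ

lemma palSet_nil : palSet Θ ([] : List A) = {[]} := by
  ext p
  simp only [palSet, Set.mem_setOf_eq, List.infix_nil, Set.mem_singleton_iff]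
  constructor
  · rintro ⟨rfl, -⟩; rfl
  · rintro rfl; exact ⟨rfl, theta_nil hΘ⟩

omit hΘ in
lemma pairSet_nil : pairSet Θ ([] : List A) = ∅ := by
  ext P; simp [pairSet]

lemma defect_nil : defect Θ ([] : List A) = 0 := by
  rw [defect_def, palSet_nil hΘ, pairSet_nil]
  simp

lemma defect_step (w : List A) (c : A) : defect Θ w ≤ defect Θ (w ++ [c]) := by
  have := step_le hΘ w c
  rw [defect_def, defect_def]
  have hlen : (w ++ [c]).length = w.length + 1 := by simp
  rw [hlen]
  push_cast
  omega

lemma defect_nonneg (w : List A) : 0 ≤ defect Θ w := by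
  induction w using List.reverseRecOn with
  | nil => rw [defect_nil hΘ]
  | append_singleton t c ih => exact le_trans ih (defect_step hΘ t c)

lemma defect_append_right (w y : List A) : defect Θ w ≤ defect Θ (w ++ y) := by
  induction y using List.reverseRecOn with
  | nil => simp
  | append_singleton t c ih =>
      calc defect Θ w ≤ defect Θ (w ++ t) := ih
        _ ≤ defect Θ ((w ++ t) ++ [c]) := defect_step hΘ _ _
        _ = defect Θ (w ++ (t ++ [c])) := by rw [List.append_assoc]

lemma mem_theta {a : A} {w : List A} : a ∈ Θ w ↔ th hΘ a ∈ w := by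
  rw [theta_eq hΘ]
  simp only [List.mem_map, List.mem_reverse]
  constructor
  · rintro ⟨b, hb, rfl⟩
    rwa [th_invol hΘ]
  · intro h
    exact ⟨th hΘ a, h, th_invol hΘ a⟩

lemma palSet_theta (w : List A) : palSet Θ (Θ w) = palSet Θ w := by
  ext p
  simp only [palSet, Set.mem_setOf_eq]
  constructor
  · rintro ⟨hinf, hpal⟩
    refine ⟨?_, hpal⟩
    have := theta_infix hΘ hinf
    rwa [hpal, hΘ.2] at this
  · rintro ⟨hinf, hpal⟩
    refine ⟨?_, hpal⟩
    have := theta_infix hΘ hinf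
    rwa [hpal] at this

lemma pairOf_th (a : A) : pairOf Θ (th hΘ a) = pairOf Θ a := by
  ext b
  simp only [pairOf, Set.mem_setOf_eq, th_spec hΘ, th_invol hΘ]
  tauto

lemma thne_iff {a : A} : Θ [a] ≠ [a] ↔ th hΘ a ≠ a := by
  rw [th_spec hΘ]
  constructor
  · intro h he; exact h (by rw [he])
  · intro h he; exact h (List.singleton_inj.mp he)

lemma pairSet_theta (w : List A) : pairSet Θ (Θ w) = pairSet Θ w := by
  ext P
  constructor
  · rintro ⟨a, ha, hne, rfl⟩
    refine ⟨th hΘ a, (mem_theta hΘ).mp ha, ?_, ?_⟩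
    · rw [thne_iff hΘ, th_invol hΘ]
      intro he
      exact (thne_iff hΘ).mp hne he.symm
    · exact (pairOf_th hΘ a).symm
  · rintro ⟨a, ha, hne, rfl⟩
    refine ⟨th hΘ a, (mem_theta hΘ).mpr (by rwa [th_invol hΘ]), ?_, ?_⟩
    · rw [thne_iff hΘ, th_invol hΘ]
      intro he
      exact (thne_iff hΘ).mp hne he.symm
    · exact (pairOf_th hΘ a).symm

lemma defect_theta (w : List A) : defect Θ (Θ w) = defect Θ w := by
  rw [defect_def, defect_def, palSet_theta hΘ, pairSet_theta hΘ, length_theta hΘ]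

lemma defect_append_left (x w : List A) : defect Θ w ≤ defect Θ (x ++ w) := by
  calc defect Θ w = defect Θ (Θ w) := (defect_theta hΘ w).symm
    _ ≤ defect Θ (Θ w ++ Θ x) := defect_append_right hΘ _ _
    _ = defect Θ (Θ (x ++ w)) := by rw [hΘ.1]
    _ = defect Θ (x ++ w) := defect_theta hΘ _

lemma defect_infix_mono {w w' : List A} (h : w <:+: w') : defect Θ w ≤ defect Θ w' := by
  obtain ⟨x, t, rfl⟩ := h
  calc defect Θ w ≤ defect Θ (w ++ t) := defect_append_right hΘ _ _
    _ ≤ defect Θ (x ++ (w ++ t)) := defect_append_left hΘ _ _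
    _ = defect Θ (x ++ w ++ t) := by rw [List.append_assoc]

end Anti

end RichAux
namespace RichAux

variable {A : Type*} (u : ℕ → A)

@[simp] lemma length_factorAt (i n : ℕ) : (factorAt u i n).length = n := by
  simp [factorAt]

lemma getElem_factorAt (i n j : ℕ) (h : j < (factorAt u i n).length) :
    (factorAt u i n)[j] = u (i + j) := by
  simp [factorAt]

lemma factorAt_add (i a b : ℕ) :
    factorAt u i (a + b) = factorAt u i a ++ factorAt u (i + a) b := by
  simp [factorAt, List.range_add, Function.comp_def, Nat.add_assoc]

lemma factorAt_one (i : ℕ) : factorAt u i 1 = [u i] := by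
  simp [factorAt, List.range_succ]

lemma prefixWord_add (a b : ℕ) :
    prefixWord u (a + b) = prefixWord u a ++ factorAt u a b := by
  have := factorAt_add u 0 a b
  simpa [prefixWord] using this

lemma prefixWord_succ (n : ℕ) : prefixWord u (n + 1) = prefixWord u n ++ [u n] := by
  rw [prefixWord_add, factorAt_one]

@[simp] lemma length_prefixWord (n : ℕ) : (prefixWord u n).length = n := by
  simp [prefixWord]

lemma getElem_prefixWord (n j : ℕ) (h : j < (prefixWord u n).length) :
    (prefixWord u n)[j] = u j := by
  simp [prefixWord, factorAt]

lemma factorAt_infix_prefixWord {i n M : ℕ} (h : i + n ≤ M) :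
    factorAt u i n <:+: prefixWord u M := by
  have hM : M = i + n + (M - i - n) := by omega
  rw [hM, prefixWord_add, prefixWord_add]
  exact ⟨prefixWord u i, factorAt u (i + n) (M - i - n), by rw [List.append_assoc]⟩

lemma occursAt_factorAt (i n : ℕ) : OccursAt u (factorAt u i n) i := by
  unfold OccursAt
  rw [length_factorAt]

lemma isFactorOf_factorAt (i n : ℕ) : IsFactorOf (factorAt u i n) u :=
  ⟨i, occursAt_factorAt u i n⟩

lemma isFactorOf_prefixWord (n : ℕ) : IsFactorOf (prefixWord u n) u :=
  ⟨0, occursAt_factorAt u 0 n⟩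

lemma factorAt_shift {i j t r L : ℕ} (hagree : factorAt u j L = factorAt u i L)
    (h : t + r ≤ L) : factorAt u (j + t) r = factorAt u (i + t) r := by
  apply List.ext_getElem (by simp)
  intro k h1 h2
  rw [getElem_factorAt, getElem_factorAt]
  have hk : t + k < L := by
    rw [length_factorAt] at h1
    omega
  have h1' : (factorAt u j L)[t + k]'(by simpa using hk) =
      (factorAt u i L)[t + k]'(by simpa using hk) := by
    simp only [hagree]
  rw [getElem_factorAt, getElem_factorAt] at h1'
  rw [Nat.add_assoc, Nat.add_assoc]
  exact h1'

lemma eq_factorAt_of_append {M : ℕ} {x s t : List A}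
    (h : prefixWord u M = x ++ s ++ t) : s = factorAt u x.length s.length := by
  have hM : M = x.length + (s.length + t.length) := by
    have := congrArg List.length h
    simp at this
    omega
  have hd : prefixWord u M = prefixWord u x.length ++
      (factorAt u x.length s.length ++ factorAt u (x.length + s.length) t.length) := by
    rw [hM, prefixWord_add, factorAt_add]
  have h' : x ++ (s ++ t) = prefixWord u x.length ++
      (factorAt u x.length s.length ++ factorAt u (x.length + s.length) t.length) := by
    rw [← List.append_assoc, ← h, hd]
  obtain ⟨-, hst⟩ := List.append_inj h' (by simp)
  obtain ⟨hs, -⟩ := List.append_inj hst (by simp)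
  exact hs

lemma exists_eventually_const {C : ℤ} (d : ℕ → ℤ) (mono : ∀ n, d n ≤ d (n + 1))
    (bdd : ∀ n, d n ≤ C) : ∃ M, ∀ m, M ≤ m → d m = d M := by
  have hmono : ∀ a b, a ≤ b → d a ≤ d b := by
    intro a b hab
    induction b, hab using Nat.le_induction with
    | base => exact le_refl _
    | succ n hn ih => exact le_trans ih (mono n)
  obtain ⟨z, ⟨M, hM⟩, hub⟩ :=
    Int.exists_greatest_of_bdd (P := fun z => ∃ n, d n = z)
      ⟨C, fun z hz => by obtain ⟨n, rfl⟩ := hz; exact bdd n⟩ ⟨d 0, 0, rfl⟩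
  subst hM
  exact ⟨M, fun m hm => le_antisymm (hub (d m) ⟨m, rfl⟩) (hmono M m hm)⟩

end RichAux
namespace RichAux

variable {A : Type*} {Θ : List A → List A} (hΘ : IsAntimorphism Θ) (u : ℕ → A)
include hΘ

lemma exists_stable (hdef : FiniteDefect Θ u) :
    ∃ M, ∀ m, M ≤ m → defect Θ (prefixWord u (m + 1)) = defect Θ (prefixWord u m) := by
  obtain ⟨C, hC⟩ := hdef
  obtain ⟨M, hM⟩ := exists_eventually_const (fun m => defect Θ (prefixWord u m))
    (fun n => by show defect Θ (prefixWord u n) ≤ defect Θ (prefixWord u (n + 1)); rw [prefixWord_succ]; exact defect_step hΘ _ _)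
    (fun n => hC _ (isFactorOf_prefixWord u n))
  exact ⟨M, fun m hm => by rw [hM (m + 1) (by omega), hM m hm]⟩

lemma step_dichotomy {m : ℕ}
    (heq : defect Θ (prefixWord u (m + 1)) = defect Θ (prefixWord u m)) :
    (∃ s, s ∈ palSet Θ (prefixWord u (m + 1)) ∧ s ∉ palSet Θ (prefixWord u m)) ∨
    (Θ [u m] ≠ [u m] ∧ u m ∉ prefixWord u m ∧ th hΘ (u m) ∉ prefixWord u m) := by
  have hsucc := prefixWord_succ u m
  have hpal_le : (palSet Θ (prefixWord u m)).ncard ≤ (palSet Θ (prefixWord u (m + 1))).ncard := by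
    apply Set.ncard_le_ncard (palSet_mono ?_) (palSet_finite _ _)
    rw [hsucc]; exact ⟨[], [u m], by simp⟩
  have hpair_le : (pairSet Θ (prefixWord u m)).ncard ≤
      (pairSet Θ (prefixWord u (m + 1))).ncard := by
    apply Set.ncard_le_ncard (pairSet_mono ?_) (pairSet_finite _ _)
    rw [hsucc]; exact ⟨[], [u m], by simp⟩
  have hsum : (palSet Θ (prefixWord u (m + 1))).ncard + (pairSet Θ (prefixWord u (m + 1))).ncard
      = (palSet Θ (prefixWord u m)).ncard + (pairSet Θ (prefixWord u m)).ncard + 1 := by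
    have hle : (palSet Θ (prefixWord u (m + 1))).ncard + (pairSet Θ (prefixWord u (m + 1))).ncard
        ≤ (palSet Θ (prefixWord u m)).ncard + (pairSet Θ (prefixWord u m)).ncard + 1 := by
      rw [hsucc]; exact step_le hΘ _ _
    rw [defect_def, defect_def] at heq
    simp only [length_prefixWord] at heq
    omega
  rcases Nat.lt_or_ge (palSet Θ (prefixWord u m)).ncard
      (palSet Θ (prefixWord u (m + 1))).ncard with hlt | hge
  · left
    by_contra hno
    push_neg at hno
    have hsub : palSet Θ (prefixWord u (m + 1)) ⊆ palSet Θ (prefixWord u m) := by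
      intro s hs
      by_contra hns
      exact hns (hno s hs)
    have := Set.ncard_le_ncard hsub (palSet_finite _ _)
    omega
  · right
    have hne : (pairSet Θ (prefixWord u (m + 1)) \ pairSet Θ (prefixWord u m)).Nonempty := by
      rw [Set.nonempty_iff_ne_empty]
      intro hemp
      have hsub : pairSet Θ (prefixWord u (m + 1)) ⊆ pairSet Θ (prefixWord u m) := by
        intro P hP
        by_contra hnp
        exact absurd (Set.mem_empty_iff_false P |>.mp (hemp ▸ ⟨hP, hnp⟩)) id
      have := Set.ncard_le_ncard hsub (pairSet_finite _ _)
      omega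
    obtain ⟨P, hP⟩ := hne
    rw [hsucc] at hP
    obtain ⟨h1, h2, h3, -⟩ := newPair_elim hΘ hP
    exact ⟨h1, h2, h3⟩

end RichAux
namespace RichAux

/-- the block alphabet: words of length `N+1` -/
def BW (A : Type*) (N : ℕ) : Type _ := {w : List A // w.length = N + 1}

variable {A : Type*} {Θ : List A → List A}

lemma finite_BW [Fintype A] (N : ℕ) : Finite (BW A N) := by
  apply Finite.of_injective (fun b : BW A N => (fun i : Fin (N + 1) => b.1[(i : ℕ)]'(by
    rw [b.2]; exact i.isLt)))
  intro b c hbc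
  apply Subtype.ext
  apply List.ext_getElem (by rw [b.2, c.2])
  intro k h1 h2
  have hk : k < N + 1 := by rw [b.2] at h1; exact h1
  exact congrFun hbc ⟨k, hk⟩

/-- the letter involution on blocks -/
def lmap (N : ℕ) (hΘ : IsAntimorphism Θ) (b : BW A N) : BW A N :=
  ⟨Θ b.1, by rw [length_theta hΘ]; exact b.2⟩

/-- the induced antimorphism on block words -/
def Th2 (N : ℕ) (hΘ : IsAntimorphism Θ) : List (BW A N) → List (BW A N) :=
  fun x => (x.map (lmap N hΘ)).reverse

lemma lmap_invol (N : ℕ) (hΘ : IsAntimorphism Θ) (b : BW A N) :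
    lmap N hΘ (lmap N hΘ b) = b := Subtype.ext (hΘ.2 b.1)

lemma isAnti_Th2 (N : ℕ) (hΘ : IsAntimorphism Θ) : IsAntimorphism (Th2 N hΘ) := by
  constructor
  · intro x y
    simp [Th2]
  · intro x
    simp [Th2, List.map_reverse, List.map_map, Function.comp_def, lmap_invol N hΘ]

/-- the block coding of `u` -/
def vword (u : ℕ → A) (N : ℕ) : ℕ → BW A N :=
  fun n => ⟨factorAt u n (N + 1), length_factorAt u n (N + 1)⟩

lemma vword_val (u : ℕ → A) (N n : ℕ) : (vword u N n).1 = factorAt u n (N + 1) := rfl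

/-- blocks agree iff the underlying factors agree -/
lemma blocks_of_word {u : ℕ → A} {N i j k : ℕ}
    (h : factorAt u j (k + N + 1) = factorAt u i (k + N + 1)) :
    factorAt (vword u N) j (k + 1) = factorAt (vword u N) i (k + 1) := by
  apply List.ext_getElem (by simp)
  intro t h1 h2
  rw [getElem_factorAt, getElem_factorAt]
  apply Subtype.ext
  rw [vword_val, vword_val]
  have ht : t < k + 1 := by simpa using h1
  exact factorAt_shift u h (by omega)

lemma word_of_blocks {u : ℕ → A} {N i j k : ℕ}
    (h : factorAt (vword u N) j (k + 1) = factorAt (vword u N) i (k + 1)) :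
    factorAt u j (k + N + 1) = factorAt u i (k + N + 1) := by
  apply List.ext_getElem (by simp)
  intro r h1 h2
  rw [getElem_factorAt, getElem_factorAt]
  have hr : r < k + N + 1 := by simpa using h1
  set t := min r k with htdef
  have ht : t ≤ k := min_le_right r k
  have hblock : vword u N (j + t) = vword u N (i + t) := by
    have e1 : (factorAt (vword u N) j (k + 1))[t]'(by simp; omega) =
        (factorAt (vword u N) i (k + 1))[t]'(by simp; omega) := by
      simp only [h]
    rwa [getElem_factorAt, getElem_factorAt] at e1
  have hval := congrArg Subtype.val hblock
  rw [vword_val, vword_val] at hval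
  have he : r - t ≤ N := by omega
  have e2 : (factorAt u (j + t) (N + 1))[r - t]'(by simp; omega) =
      (factorAt u (i + t) (N + 1))[r - t]'(by simp; omega) := by
    simp only [hval]
  rw [getElem_factorAt, getElem_factorAt] at e2
  have eji : j + t + (r - t) = j + r := by omega
  have eii : i + t + (r - t) = i + r := by omega
  rw [eji, eii] at e2
  exact e2

/-- a `Θ`-palindromic factor of `u` of length `≥ N+1` gives a `Th2`-palindromic
block word -/
lemma pal_blocks {u : ℕ → A} {N j k : ℕ} (hΘ : IsAntimorphism Θ)
    (hs : Θ (factorAt u j (k + N + 1)) = factorAt u j (k + N + 1)) :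
    Th2 N hΘ (factorAt (vword u N) j (k + 1)) = factorAt (vword u N) j (k + 1) := by
  set L := k + N + 1 with hL
  have hpt : ∀ r, r < L → th hΘ (u (j + (L - 1 - r))) = u (j + r) := by
    intro r hr
    have e0 : (factorAt u j L).reverse.map (th hΘ) = factorAt u j L := by
      rw [← theta_eq hΘ]; exact hs
    have e1 : ((factorAt u j L).reverse.map (th hΘ))[r]'(by simpa using hr) =
        (factorAt u j L)[r]'(by simpa using hr) := by
      simp only [e0]
    simp only [List.getElem_map, List.getElem_reverse, List.length_reverse,
      length_factorAt] at e1
    rw [getElem_factorAt, getElem_factorAt] at e1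
    exact e1
  have key : ∀ t, t ≤ k → lmap N hΘ (vword u N (j + (k - t))) = vword u N (j + t) := by
    intro t ht
    apply Subtype.ext
    simp only [lmap, vword_val]
    rw [theta_eq hΘ]
    apply List.ext_getElem (by simp)
    intro e he1 he2
    have he : e < N + 1 := by simpa using he2
    simp only [List.getElem_map, List.getElem_reverse, List.length_reverse, length_factorAt]
    rw [getElem_factorAt, getElem_factorAt]
    have harith : j + (k - t) + (N + 1 - 1 - e) = j + (L - 1 - (t + e)) := by omega
    rw [harith, hpt (t + e) (by omega)]
    congr 1
    omega
  apply List.ext_getElem (by simp [Th2])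
  intro t h1 h2
  have ht : t < k + 1 := by simpa using h2
  simp only [Th2, List.getElem_reverse, List.getElem_map, List.length_map, length_factorAt]
  rw [getElem_factorAt, getElem_factorAt]
  have harith : k + 1 - 1 - t = k - t := by omega
  rw [harith]
  exact key t (by omega)

end RichAux
namespace RichAux

variable {A : Type*} {Θ : List A → List A}

lemma factorAt_snoc (u : ℕ → A) (j n : ℕ) :
    factorAt u j (n + 1) = factorAt u j n ++ [u (j + n)] := by
  rw [factorAt_add u j n 1, factorAt_one]

lemma factorAt_head? (u : ℕ → A) (j n : ℕ) :
    (factorAt u j (n + 1)).head? = some (u j) := by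
  have h : factorAt u j (n + 1) = factorAt u j 1 ++ factorAt u (j + 1) n := by
    have := factorAt_add u j 1 n
    rw [Nat.add_comm 1 n] at this
    exact this
  rw [h, factorAt_one]
  rfl

lemma factorAt_getLast? (u : ℕ → A) (j n : ℕ) :
    (factorAt u j (n + 1)).getLast? = some (u (j + n)) := by
  rw [factorAt_snoc, List.getLast?_concat]

lemma mem_prefixWord {u : ℕ → A} {a : A} {M : ℕ} :
    a ∈ prefixWord u M ↔ ∃ i, i < M ∧ u i = a := by
  simp [prefixWord, factorAt, List.mem_map, List.mem_range]

section Anti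

variable (hΘ : IsAntimorphism Θ)
include hΘ

lemma theta_head? (w : List A) : (Θ w).head? = w.getLast?.map (th hΘ) := by
  rw [theta_eq hΘ, List.head?_map, List.head?_reverse]

/-- case A with a long new palindrome: gives a new `Th2`-palindrome -/
lemma long_new_pal {u : ℕ → A} {N n j k : ℕ} {s : List A} (hjk : j + k = n)
    (hs : s = factorAt u j (k + N + 1)) (hpal : Θ s = s)
    (hnew : s ∉ palSet Θ (prefixWord u (n + N))) :
    factorAt (vword u N) j (k + 1) ∈ palSet (Th2 N hΘ) (prefixWord (vword u N) (n + 1)) ∧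
    factorAt (vword u N) j (k + 1) ∉ palSet (Th2 N hΘ) (prefixWord (vword u N) n) := by
  constructor
  · constructor
    · apply factorAt_infix_prefixWord
      omega
    · apply pal_blocks hΘ
      rw [← hs]
      exact hpal
  · rintro ⟨hinf, -⟩
    obtain ⟨x, t, hxt⟩ := hinf
    have hS : factorAt (vword u N) j (k + 1) =
        factorAt (vword u N) x.length (k + 1) := by
      have := eq_factorAt_of_append (vword u N) hxt.symm
      rwa [length_factorAt] at this
    have hlen : x.length + (k + 1) + t.length = n := by
      have := congrArg List.length hxt
      simp at this
      omega
    have hword := word_of_blocks hS.symm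
    apply hnew
    constructor
    · rw [hs, ← hword]
      apply factorAt_infix_prefixWord
      omega
    · exact hpal

/-- a genuinely new block letter pair: gives a new `Th2`-pair -/
lemma new_pair_blocks {u : ℕ → A} {N n : ℕ}
    (hb1 : Θ (factorAt u n (N + 1)) ≠ factorAt u n (N + 1))
    (hb2 : ∀ j, j + (N + 1) ≤ n + N →
      factorAt u j (N + 1) ≠ factorAt u n (N + 1) ∧
      factorAt u j (N + 1) ≠ Θ (factorAt u n (N + 1))) :
    pairOf (Th2 N hΘ) (vword u N n) ∈ pairSet (Th2 N hΘ) (prefixWord (vword u N) (n + 1)) ∧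
    pairOf (Th2 N hΘ) (vword u N n) ∉ pairSet (Th2 N hΘ) (prefixWord (vword u N) n) := by
  have hTh2single : ∀ b : BW A N, Th2 N hΘ [b] = [lmap N hΘ b] := by
    intro b; simp [Th2]
  have hne : Th2 N hΘ [vword u N n] ≠ [vword u N n] := by
    rw [hTh2single]
    intro h
    exact hb1 (congrArg Subtype.val (List.singleton_inj.mp h))
  constructor
  · refine ⟨vword u N n, ?_, hne, rfl⟩
    rw [prefixWord_succ]
    simp
  · rintro ⟨a, ha, hane, hPa⟩
    obtain ⟨jj, hjj, hav⟩ := List.mem_iff_getElem.mp ha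
    rw [getElem_prefixWord] at hav
    have hjn : jj < n := by simpa using hjj
    have hmem : vword u N n ∈ pairOf (Th2 N hΘ) (vword u N n) := Or.inl rfl
    rw [hPa] at hmem
    rw [hTh2single] at hmem
    rcases hmem with hm | hm
    · -- v n = a = v jj
      have : factorAt u jj (N + 1) = factorAt u n (N + 1) := by
        have := congrArg Subtype.val (List.singleton_inj.mp hm)
        rw [← hav] at this
        exact this.symm
      exact (hb2 jj (by omega)).1 this
    · -- v n = lmap a
      have hal : a = lmap N hΘ (vword u N n) := by
        have h1 := List.singleton_inj.mp hm
        have := congrArg (lmap N hΘ) h1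
        rw [lmap_invol] at this
        exact this.symm
      have : factorAt u jj (N + 1) = Θ (factorAt u n (N + 1)) := by
        have := congrArg Subtype.val hal
        rw [← hav] at this
        exact this
      exact (hb2 jj (by omega)).2 this

/-- the key per-step lemma for the block word -/
lemma vstep {u : ℕ → A} {N : ℕ} (hN : 1 ≤ N)
    (hstab : ∀ m, N ≤ m → defect Θ (prefixWord u (m + 1)) = defect Θ (prefixWord u m))
    (n : ℕ) :
    (∃ S, S ∈ palSet (Th2 N hΘ) (prefixWord (vword u N) (n + 1)) ∧
      S ∉ palSet (Th2 N hΘ) (prefixWord (vword u N) n)) ∨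
    (∃ P, P ∈ pairSet (Th2 N hΘ) (prefixWord (vword u N) (n + 1)) ∧
      P ∉ pairSet (Th2 N hΘ) (prefixWord (vword u N) n)) := by
  rcases step_dichotomy hΘ u (hstab (n + N) (by omega)) with ⟨s, hsin, hsnot⟩ | ⟨hc1, hc2, hc3⟩
  · -- case A : a new Θ-palindrome s at u-step n+N
    have hpal : Θ s = s := hsin.2
    have hsuf : s <:+ prefixWord u (n + N + 1) := by
      have := newPal_suffix (Θ := Θ) (w := prefixWord u (n + N)) (c := u (n + N))
        (p := s) hΘ
      rw [← prefixWord_succ] at this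
      exact this ⟨hsin, hsnot⟩
    rcases Nat.lt_or_ge s.length (N + 1) with hshort | hlong
    · -- short new palindrome
      set bval := factorAt u n (N + 1) with hbval
      have hbsuf : bval <:+ prefixWord u (n + N + 1) := by
        have : n + N + 1 = n + (N + 1) := by omega
        rw [this, prefixWord_add]
        exact ⟨prefixWord u n, rfl⟩
      have hssub : s <:+ bval :=
        List.suffix_of_suffix_length_le hsuf hbsuf (by simp [hbval]; omega)
      have hkey : ∀ j, j + (N + 1) ≤ n + N →
          factorAt u j (N + 1) ≠ bval ∧ factorAt u j (N + 1) ≠ Θ bval := by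
        intro j hj
        constructor
        · intro he
          apply hsnot
          refine ⟨?_, hpal⟩
          calc s <:+: factorAt u j (N + 1) := by rw [he]; exact hssub.isInfix
            _ <:+: prefixWord u (n + N) := factorAt_infix_prefixWord u hj
        · intro he
          apply hsnot
          refine ⟨?_, hpal⟩
          have hp : s <+: Θ bval := by
            have := theta_suffix_prefix hΘ hssub
            rwa [hpal] at this
          calc s <:+: factorAt u j (N + 1) := by rw [he]; exact hp.isInfix
            _ <:+: prefixWord u (n + N) := factorAt_infix_prefixWord u hj
      rcases eq_or_ne (Θ bval) bval with hbb | hbb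
      · -- the block itself is a new palindrome of length N+1
        left
        refine ⟨factorAt (vword u N) n 1, ?_⟩
        have := long_new_pal hΘ (u := u) (N := N) (n := n) (j := n) (k := 0)
          (s := bval) (by omega) (by simp [hbval]) hbb ?_
        · simpa using this
        · rintro ⟨hinf, -⟩
          obtain ⟨x, t, hxt⟩ := hinf
          have hb' : bval = factorAt u x.length (N + 1) := by
            have := eq_factorAt_of_append u hxt.symm
            rwa [hbval, length_factorAt] at this
          have hlen : x.length + (N + 1) + t.length = n + N := by
            have := congrArg List.length hxt
            simp [hbval] at this
            omega
          exact (hkey x.length (by omega)).1 hb'.symm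
      · right
        exact ⟨pairOf (Th2 N hΘ) (vword u N n), new_pair_blocks hΘ hbb hkey⟩
    · -- long new palindrome
      left
      obtain ⟨x, hx⟩ := hsuf
      have hxlen : x.length + s.length = n + N + 1 := by
        have := congrArg List.length hx
        simpa using this
      set k := s.length - (N + 1) with hk
      have hjk : x.length + k = n := by omega
      have hsfa : s = factorAt u x.length (k + N + 1) := by
        have h0 : prefixWord u (n + N + 1) = x ++ s ++ [] := by
          rw [List.append_nil]; exact hx.symm
        have h1 := eq_factorAt_of_append u h0
        rwa [(show s.length = k + N + 1 by omega)] at h1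
      exact ⟨factorAt (vword u N) x.length (k + 1), long_new_pal hΘ hjk hsfa hpal hsnot⟩
  · -- case B : a new letter pair at u-step n+N
    right
    set bval := factorAt u n (N + 1) with hbval
    have hlast : bval.getLast? = some (u (n + N)) := factorAt_getLast? u n N
    have hhead : bval.head? = some (u n) := factorAt_head? u n N
    have hthhead : (Θ bval).head? = some (th hΘ (u (n + N))) := by
      rw [theta_head? hΘ, hlast]
      rfl
    have humem : ∀ i, i < n + N → u i ∈ prefixWord u (n + N) := by
      intro i hi
      exact mem_prefixWord.mpr ⟨i, hi, rfl⟩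
    have hbb : Θ bval ≠ bval := by
      intro h
      apply hc3
      have : bval.head? = some (th hΘ (u (n + N))) := by rw [← h]; exact hthhead
      rw [hhead] at this
      have h2 := Option.some_inj.mp this
      rw [← h2]
      exact humem n (by omega)
    have hkey : ∀ j, j + (N + 1) ≤ n + N →
        factorAt u j (N + 1) ≠ bval ∧ factorAt u j (N + 1) ≠ Θ bval := by
      intro j hj
      constructor
      · intro he
        apply hc2
        have : (factorAt u j (N + 1)).getLast? = some (u (n + N)) := by rw [he]; exact hlast
        rw [factorAt_getLast? u j N] at this
        have := Option.some_inj.mp this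
        rw [← this]
        exact humem (j + N) (by omega)
      · intro he
        apply hc3
        have : (factorAt u j (N + 1)).head? = some (th hΘ (u (n + N))) := by
          rw [he]; exact hthhead
        rw [factorAt_head? u j N] at this
        have := Option.some_inj.mp this
        rw [← this]
        exact humem j (by omega)
    exact ⟨pairOf (Th2 N hΘ) (vword u N n), new_pair_blocks hΘ hbb hkey⟩

end Anti

end RichAux
namespace RichAux

variable {A : Type*} {Θ : List A → List A}

lemma ncard_succ_le {α : Type*} {s t : Set α} (hsub : s ⊆ t) (ht : t.Finite) {a : α}
    (hat : a ∈ t) (has : a ∉ s) : s.ncard + 1 ≤ t.ncard := by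
  have h1 : (insert a s).ncard = s.ncard + 1 :=
    Set.ncard_insert_of_notMem has (ht.subset hsub)
  have h2 : insert a s ⊆ t := Set.insert_subset hat hsub
  have := Set.ncard_le_ncard h2 ht
  omega

lemma prefixWord_zero (v : ℕ → A) : prefixWord v 0 = [] := by
  simp [prefixWord, factorAt]

section Anti

variable (hΘ : IsAntimorphism Θ)
include hΘ

lemma rich_prefix {u : ℕ → A} {N : ℕ} (hN : 1 ≤ N)
    (hstab : ∀ m, N ≤ m → defect Θ (prefixWord u (m + 1)) = defect Θ (prefixWord u m))
    (n : ℕ) :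
    (palSet (Th2 N hΘ) (prefixWord (vword u N) n)).ncard +
      (pairSet (Th2 N hΘ) (prefixWord (vword u N) n)).ncard = n + 1 := by
  induction n with
  | zero =>
      rw [prefixWord_zero, palSet_nil (isAnti_Th2 N hΘ), pairSet_nil]
      simp
  | succ n ih =>
      have hinf : prefixWord (vword u N) n <:+: prefixWord (vword u N) (n + 1) :=
        ⟨[], [vword u N n], by rw [prefixWord_succ]; simp⟩
      have hup : (palSet (Th2 N hΘ) (prefixWord (vword u N) (n + 1))).ncard +
          (pairSet (Th2 N hΘ) (prefixWord (vword u N) (n + 1))).ncard ≤ n + 1 + 1 := by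
        rw [prefixWord_succ]
        have := step_le (isAnti_Th2 N hΘ) (prefixWord (vword u N) n) (vword u N n)
        omega
      have hpal_mono : (palSet (Th2 N hΘ) (prefixWord (vword u N) n)).ncard ≤
          (palSet (Th2 N hΘ) (prefixWord (vword u N) (n + 1))).ncard :=
        Set.ncard_le_ncard (palSet_mono hinf) (palSet_finite _ _)
      have hpair_mono : (pairSet (Th2 N hΘ) (prefixWord (vword u N) n)).ncard ≤
          (pairSet (Th2 N hΘ) (prefixWord (vword u N) (n + 1))).ncard :=
        Set.ncard_le_ncard (pairSet_mono hinf) (pairSet_finite _ _)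
      rcases vstep hΘ hN hstab n with ⟨S, hS1, hS2⟩ | ⟨P, hP1, hP2⟩
      · have := ncard_succ_le (palSet_mono hinf) (palSet_finite _ _) hS1 hS2
        omega
      · have := ncard_succ_le (pairSet_mono hinf) (pairSet_finite _ _) hP1 hP2
        omega

lemma rich_vword {u : ℕ → A} {N : ℕ} (hN : 1 ≤ N)
    (hstab : ∀ m, N ≤ m → defect Θ (prefixWord u (m + 1)) = defect Θ (prefixWord u m)) :
    RichWord (Th2 N hΘ) (vword u N) := by
  intro w hw
  obtain ⟨i, hocc⟩ := hw
  have hinf : w <:+: prefixWord (vword u N) (i + w.length) := by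
    conv_lhs => rw [hocc]
    exact factorAt_infix_prefixWord _ le_rfl
  have h1 := defect_infix_mono (isAnti_Th2 N hΘ) hinf
  have h2 : defect (Th2 N hΘ) (prefixWord (vword u N) (i + w.length)) = 0 := by
    have h3 := rich_prefix hΘ hN hstab (i + w.length)
    rw [defect_def, length_prefixWord]
    push_cast
    omega
  have h0 := defect_nonneg (isAnti_Th2 N hΘ) w
  omega

end Anti

lemma recurrent_vword {u : ℕ → A} (N : ℕ) (hrec : Recurrent u) :
    Recurrent (vword u N) := by
  intro w hw Nbd
  obtain ⟨i, hocc⟩ := hw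
  rcases hL : w.length with _ | k
  · have hwnil : w = [] := List.length_eq_zero_iff.mp hL
    exact ⟨Nbd, le_rfl, by rw [hwnil]; simp [OccursAt, factorAt]⟩
  · obtain ⟨j, hj, hqocc⟩ := hrec (factorAt u i (k + N + 1))
      (isFactorOf_factorAt u i (k + N + 1)) Nbd
    refine ⟨j, hj, ?_⟩
    unfold OccursAt at hqocc ⊢
    rw [length_factorAt] at hqocc
    have hblocks := blocks_of_word (N := N) hqocc.symm
    calc w = factorAt (vword u N) i w.length := hocc
      _ = factorAt (vword u N) i (k + 1) := by rw [hL]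
      _ = factorAt (vword u N) j (k + 1) := hblocks.symm
      _ = factorAt (vword u N) j w.length := by rw [hL]

/-- the letter morphism -/
def phi (N : ℕ) : BW A N → List A := fun b => b.1.take 1

lemma factorAt_cons (u : ℕ → A) (j n : ℕ) :
    factorAt u j (n + 1) = u j :: factorAt u (j + 1) n := by
  have h := factorAt_add u j 1 n
  rw [Nat.add_comm 1 n] at h
  rw [h, factorAt_one]
  rfl

lemma flatMap_phi (u : ℕ → A) (N n : ℕ) :
    (prefixWord (vword u N) n).flatMap (phi N) = prefixWord u n := by
  induction n with
  | zero => rw [prefixWord_zero, prefixWord_zero]; rfl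
  | succ n ih =>
      rw [prefixWord_succ, List.flatMap_append, ih, prefixWord_succ]
      congr 1
      show phi N (vword u N n) ++ [] = [u n]
      rw [List.append_nil]
      unfold phi
      rw [vword_val, factorAt_cons]
      rfl

lemma morphic (u : ℕ → A) (N : ℕ) : IsMorphicImage u (phi N) (vword u N) := by
  constructor
  · intro n
    rw [flatMap_phi]
    unfold OccursAt
    rw [length_prefixWord]
    rfl
  · intro Nbd
    exact ⟨Nbd, by rw [flatMap_phi, length_prefixWord]⟩

end RichAux
namespace RichAux

/-- reversal-with-letter-involution antimorphism -/
def antiOf {δ : Type*} (ℓ : δ → δ) : List δ → List δ := fun x => (x.map ℓ).reverse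

lemma antiOf_isAnti {δ : Type*} {ℓ : δ → δ} (hℓ : ∀ b, ℓ (ℓ b) = b) :
    IsAntimorphism (antiOf ℓ) := by
  constructor
  · intro x y
    simp [antiOf]
  · intro x
    simp [antiOf, List.map_reverse, List.map_map, Function.comp_def, hℓ]

lemma antiOf_singleton {δ : Type*} (ℓ : δ → δ) (a : δ) : antiOf ℓ [a] = [ℓ a] := by
  simp [antiOf]

section Transport

variable {β γ : Type*} (e : β ≃ γ)

lemma map_symm_map (l : List β) : (l.map e).map e.symm = l := by
  simp [List.map_map]

lemma map_map_symm (l : List γ) : (l.map e.symm).map e = l := by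
  simp [List.map_map]

lemma antiOf_conj (ℓ : β → β) (x : List γ) :
    antiOf (e ∘ ℓ ∘ e.symm) x = (antiOf ℓ (x.map e.symm)).map e := by
  simp [antiOf, List.map_reverse, List.map_map, Function.comp_def]

lemma palSet_map (ℓ : β → β) (w : List β) :
    palSet (antiOf (⇑e ∘ ℓ ∘ ⇑e.symm)) (w.map e) = (List.map ⇑e) '' palSet (antiOf ℓ) w := by
  ext p
  constructor
  · rintro ⟨hinf, hpal⟩
    refine ⟨p.map e.symm, ⟨?_, ?_⟩, map_map_symm e p⟩
    · have := hinf.map e.symm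
      rwa [map_symm_map] at this
    · have := congrArg (List.map e.symm) hpal
      rw [antiOf_conj, map_symm_map] at this
      exact this
  · rintro ⟨q, ⟨hinf, hpal⟩, rfl⟩
    refine ⟨hinf.map _, ?_⟩
    rw [antiOf_conj, map_symm_map, hpal]

lemma pair_desc {δ : Type*} (ℓ : δ → δ) (a : δ) :
    {b : δ | [b] = [a] ∨ [b] = antiOf ℓ [a]} = {b : δ | b = a ∨ b = ℓ a} := by
  ext b
  simp [antiOf_singleton]

lemma pairSet_map (ℓ : β → β) (w : List β) :
    pairSet (antiOf (⇑e ∘ ℓ ∘ ⇑e.symm)) (w.map e) = (Set.image ⇑e) '' pairSet (antiOf ℓ) w := by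
  ext P
  constructor
  · rintro ⟨a, ha, hne, rfl⟩
    obtain ⟨a₀, ha₀, rfl⟩ := List.mem_map.mp ha
    refine ⟨{b | [b] = [a₀] ∨ [b] = antiOf ℓ [a₀]}, ⟨a₀, ha₀, ?_, rfl⟩, ?_⟩
    · rw [antiOf_singleton]
      intro h
      apply hne
      rw [antiOf_singleton]
      have : ℓ a₀ = a₀ := List.singleton_inj.mp h
      show [(⇑e ∘ ℓ ∘ ⇑e.symm) (e a₀)] = [e a₀]
      simp [this]
    · rw [pair_desc, pair_desc]
      ext c
      simp only [Set.mem_image, Set.mem_setOf_eq, Function.comp_apply, Equiv.symm_apply_apply]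
      constructor
      · rintro ⟨x, hx | hx, rfl⟩
        · left; rw [hx]
        · right; rw [hx]
      · rintro (hc | hc)
        · exact ⟨a₀, Or.inl rfl, hc.symm⟩
        · exact ⟨ℓ a₀, Or.inr rfl, hc.symm⟩
  · rintro ⟨Q, ⟨a₀, ha₀, hne, rfl⟩, rfl⟩
    refine ⟨e a₀, List.mem_map.mpr ⟨a₀, ha₀, rfl⟩, ?_, ?_⟩
    · rw [antiOf_singleton]
      intro h
      apply hne
      rw [antiOf_singleton]
      have h2 : (⇑e ∘ ℓ ∘ ⇑e.symm) (e a₀) = e a₀ := List.singleton_inj.mp h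
      simp only [Function.comp_apply, Equiv.symm_apply_apply] at h2
      have := congrArg e.symm h2
      simp at this
      rw [this]
    · rw [pair_desc, pair_desc]
      ext c
      simp only [Set.mem_image, Set.mem_setOf_eq, Function.comp_apply, Equiv.symm_apply_apply]
      constructor
      · rintro ⟨x, hx | hx, rfl⟩
        · left; rw [hx]
        · right; rw [hx]
      · rintro (hc | hc)
        · exact ⟨a₀, Or.inl rfl, hc.symm⟩
        · exact ⟨ℓ a₀, Or.inr rfl, hc.symm⟩

lemma defect_map (ℓ : β → β) (w : List β) :
    defect (antiOf (⇑e ∘ ℓ ∘ ⇑e.symm)) (w.map e) = defect (antiOf ℓ) w := by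
  rw [defect_def, defect_def, palSet_map, pairSet_map,
    Set.ncard_image_of_injective _ (List.map_injective_iff.mpr e.injective),
    Set.ncard_image_of_injective _ (Set.image_injective.mpr e.injective),
    List.length_map]

lemma factorAt_map (v : ℕ → β) (i n : ℕ) :
    factorAt (⇑e ∘ v) i n = (factorAt v i n).map e := by
  simp [factorAt, List.map_map]

lemma occursAt_map {v : ℕ → β} {w : List γ} {i : ℕ} :
    OccursAt (⇑e ∘ v) w i ↔ OccursAt v (w.map e.symm) i := by
  unfold OccursAt
  rw [List.length_map, factorAt_map]
  constructor
  · intro h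
    have := congrArg (List.map e.symm) h
    rwa [map_symm_map] at this
  · intro h
    have := congrArg (List.map e) h
    rwa [map_map_symm] at this

end Transport

end RichAux

/-- **Theorem 1.** Any recurrent almost `Θ₁`-rich word `u` is a morphic image of a
recurrent `Θ₂`-rich word `v`, for a suitable involutive antimorphism `Θ₂`. -/
theorem recurrent_almost_rich_is_morphic_image_of_rich
    {A : Type*} [Fintype A] (Θ₁ : List A → List A) (hΘ₁ : IsAntimorphism Θ₁)
    (u : ℕ → A) (hrec : Recurrent u) (hdef : FiniteDefect Θ₁ u) :
    ∃ (B : Type), Finite B ∧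
      ∃ (Θ₂ : List B → List B) (φ : B → List A) (v : ℕ → B),
        IsAntimorphism Θ₂ ∧ Recurrent v ∧ IsMorphicImage u φ v ∧ RichWord Θ₂ v := by
  classical
  obtain ⟨M, hM⟩ := RichAux.exists_stable hΘ₁ u hdef
  set N := M + 1 with hNdef
  have hstab : ∀ m, N ≤ m → defect Θ₁ (prefixWord u (m + 1)) = defect Θ₁ (prefixWord u m) :=
    fun m hm => hM m (by omega)
  have hfin : Finite (RichAux.BW A N) := RichAux.finite_BW N
  obtain ⟨n, ⟨e⟩⟩ := Finite.exists_equiv_fin (RichAux.BW A N)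
  set ℓ : RichAux.BW A N → RichAux.BW A N := RichAux.lmap N hΘ₁ with hℓdef
  have hTh : RichAux.antiOf ℓ = RichAux.Th2 N hΘ₁ := rfl
  refine ⟨Fin n, Finite.of_fintype _, RichAux.antiOf (⇑e ∘ ℓ ∘ ⇑e.symm),
    RichAux.phi N ∘ ⇑e.symm, ⇑e ∘ RichAux.vword u N, ?_, ?_, ?_, ?_⟩
  · apply RichAux.antiOf_isAnti
    intro c
    simp [hℓdef, RichAux.lmap_invol]
  · -- recurrence of the transported word
    intro w hw Nbd
    obtain ⟨i, hocc⟩ := hw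
    have h1 : OccursAt (RichAux.vword u N) (w.map e.symm) i :=
      (RichAux.occursAt_map e).mp hocc
    obtain ⟨j, hj, h2⟩ := RichAux.recurrent_vword N hrec (w.map e.symm) ⟨i, h1⟩ Nbd
    exact ⟨j, hj, (RichAux.occursAt_map e).mpr h2⟩
  · -- morphic image
    have hm := RichAux.morphic u N
    have hpm : ∀ nn, prefixWord (⇑e ∘ RichAux.vword u N) nn =
        (prefixWord (RichAux.vword u N) nn).map e := by
      intro nn
      unfold prefixWord
      exact RichAux.factorAt_map e _ 0 nn
    have hfm : ∀ nn, (prefixWord (⇑e ∘ RichAux.vword u N) nn).flatMap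
        (RichAux.phi N ∘ ⇑e.symm) = (prefixWord (RichAux.vword u N) nn).flatMap
        (RichAux.phi N) := by
      intro nn
      rw [hpm, List.flatMap_map]
      congr 1
      funext b
      simp
    constructor
    · intro nn
      rw [hfm]
      exact hm.1 nn
    · intro Nbd
      obtain ⟨nn, hnn⟩ := hm.2 Nbd
      refine ⟨nn, ?_⟩
      rw [hfm]
      exact hnn
  · -- richness
    intro w hw
    obtain ⟨i, hocc⟩ := hw
    have h1 : OccursAt (RichAux.vword u N) (w.map e.symm) i :=
      (RichAux.occursAt_map e).mp hocc
    have h2 : defect (RichAux.Th2 N hΘ₁) (w.map e.symm) = 0 :=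
      RichAux.rich_vword hΘ₁ (by omega) hstab _ ⟨i, h1⟩
    have h3 := RichAux.defect_map e ℓ (w.map e.symm)
    rw [RichAux.map_map_symm] at h3
    rw [h3, hTh]
    exact h2
end

section
/- Let Θ : A* → A* be an involutive antimorphism on the free monoid over a finite alphabet A, and let u ∈ A^ℕ be a uniformly recurrent infinite word with finite Θ-palindromic defect. Then there exist a finite alphabet B, a monoid morphism φ : B* → A*, and a uniformly recurrent infinite word v ∈ B^ℕ such that u = φ(v) and v is rich with respect to the reversal map R (i.e., v is R-rich). -/
set_option maxHeartbeats 1000000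
set_option linter.unusedSectionVars false
set_option linter.unusedVariables false
set_option linter.unusedTactic false


namespace AlmostRich


section M1
variable {A : Type*}

@[simp] lemma factorAt_length (u : ℕ → A) (i n : ℕ) : (factorAt u i n).length = n := by
  simp [factorAt]

@[simp] lemma factorAt_getElem (u : ℕ → A) (i n k : ℕ) (hk : k < (factorAt u i n).length) :
    (factorAt u i n)[k] = u (i + k) := by
  simp [factorAt] at hk ⊢

@[simp] lemma factorAt_zero (u : ℕ → A) (i : ℕ) : factorAt u i 0 = [] := rfl

lemma factorAt_append (u : ℕ → A) (i m n : ℕ) :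
    factorAt u i (m + n) = factorAt u i m ++ factorAt u (i + m) n := by
  apply List.ext_getElem
  · simp
  intro k h1 h2
  rcases lt_or_ge k m with h | h
  · rw [List.getElem_append_left (by simpa using h)]
    simp
  · rw [List.getElem_append_right (by simpa using h)]
    simp only [factorAt_getElem, factorAt_length]
    congr 1
    simp only [factorAt_length] at h1 ⊢
    omega

lemma factorAt_split (u : ℕ → A) (i n d m : ℕ) (h : d + m ≤ n) :
    factorAt u i n = factorAt u i d ++ factorAt u (i + d) m ++ factorAt u (i + d + m) (n - d - m) := by
  rw [List.append_assoc, ← factorAt_append, ← factorAt_append]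
  congr 1
  omega

lemma factorAt_drop (u : ℕ → A) (i n d : ℕ) :
    (factorAt u i n).drop d = factorAt u (i + d) (n - d) := by
  apply List.ext_getElem
  · simp
  intro k h1 h2
  simp only [List.getElem_drop, factorAt_getElem]
  congr 1; omega

lemma factorAt_take (u : ℕ → A) (i n k : ℕ) :
    (factorAt u i n).take k = factorAt u i (min k n) := by
  apply List.ext_getElem
  · simp
  intro j h1 h2
  simp

lemma eq_take_drop_of_append {s p t l : List A} (h : s ++ p ++ t = l) :
    p = (l.drop s.length).take p.length := by
  subst h
  rw [List.append_assoc, List.drop_left, List.take_left]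

lemma infix_factorAt_iff {p : List A} {u : ℕ → A} {i n : ℕ} :
    p <:+: factorAt u i n ↔ ∃ d, d + p.length ≤ n ∧ p = factorAt u (i + d) p.length := by
  constructor
  · rintro ⟨s, t, h⟩
    refine ⟨s.length, ?_, ?_⟩
    · have := congrArg List.length h
      simp at this; omega
    · have h2 := eq_take_drop_of_append h
      rw [factorAt_drop, factorAt_take] at h2
      have hlen : p.length ≤ n - s.length := by
        have := congrArg List.length h
        simp at this; omega
      rwa [min_eq_left hlen] at h2
  · rintro ⟨d, hd, hp⟩
    refine ⟨factorAt u i d, factorAt u (i + d + p.length) (n - d - p.length), ?_⟩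
    rw [factorAt_split u i n d p.length hd, ← hp]

lemma suffix_factorAt_iff {p : List A} {u : ℕ → A} {i n : ℕ} :
    p <:+ factorAt u i n ↔ p.length ≤ n ∧ p = factorAt u (i + (n - p.length)) p.length := by
  constructor
  · rintro ⟨s, h⟩
    have hl := congrArg List.length h
    simp at hl
    constructor
    · omega
    · have h2 := eq_take_drop_of_append (t := ([] : List A)) (by simpa using h)
      rw [factorAt_drop, factorAt_take] at h2
      rw [min_eq_left (by omega)] at h2
      convert h2 using 3
      omega
  · rintro ⟨hd, hp⟩
    refine ⟨factorAt u i (n - p.length), ?_⟩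
    have h0 : factorAt u (i + (n - p.length) + p.length) (n - (n - p.length) - p.length) = [] := by
      have he : n - (n - p.length) - p.length = 0 := by omega
      rw [he]; rfl
    rw [factorAt_split u i n (n - p.length) p.length (by omega), h0, List.append_nil, ← hp]

lemma prefix_factorAt_iff {p : List A} {u : ℕ → A} {i n : ℕ} :
    p <+: factorAt u i n ↔ p.length ≤ n ∧ p = factorAt u i p.length := by
  constructor
  · rintro ⟨t, h⟩
    have hl := congrArg List.length h
    simp at hl
    constructor
    · omega
    · have h2 := eq_take_drop_of_append (s := ([] : List A)) (by simpa using h)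
      simp only [List.length_nil, List.drop_zero] at h2
      rw [factorAt_take, min_eq_left (by omega)] at h2
      exact h2
  · rintro ⟨hd, hp⟩
    have h2 : factorAt u i n = p ++ factorAt u (i + p.length) (n - p.length) := by
      rw [hp]
      simp only [factorAt_length]
      rw [← factorAt_append]
      congr 1
      omega
    exact ⟨_, h2.symm⟩

end M1


section M2
variable {A : Type*} {Θ : List A → List A}

lemma theta_nil (hΘ : IsAntimorphism Θ) : Θ [] = [] := by
  have h := hΘ.1 [] []
  simp only [List.append_nil] at h
  have hl := congrArg List.length h
  rw [List.length_append] at hl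
  have h0 : (Θ ([] : List A)).length = 0 := by omega
  exact List.length_eq_zero_iff.mp h0

lemma theta_length_ge (hΘ : IsAntimorphism Θ) (x : List A) : x.length ≤ (Θ x).length := by
  induction x with
  | nil => simp [theta_nil hΘ]
  | cons a x ih =>
    have h : Θ (a :: x) = Θ x ++ Θ [a] := by
      have := hΘ.1 [a] x
      simpa using this
    rw [h]
    simp only [List.length_append, List.length_cons]
    have hs : 1 ≤ (Θ [a]).length := by
      by_contra hc
      push_neg at hc
      interval_cases h2 : (Θ [a]).length
      have : Θ [a] = [] := List.length_eq_zero_iff.mp h2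
      have h3 := hΘ.2 [a]
      rw [this, theta_nil hΘ] at h3
      simp at h3
    omega

lemma theta_length (hΘ : IsAntimorphism Θ) (x : List A) : (Θ x).length = x.length := by
  have h1 := theta_length_ge hΘ x
  have h2 := theta_length_ge hΘ (Θ x)
  rw [hΘ.2 x] at h2
  omega

lemma theta_inj (hΘ : IsAntimorphism Θ) {x y : List A} (h : Θ x = Θ y) : x = y := by
  have := congrArg Θ h
  rwa [hΘ.2, hΘ.2] at this

lemma theta_infix (hΘ : IsAntimorphism Θ) {p q : List A} (h : p <:+: q) : Θ p <:+: Θ q := by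
  obtain ⟨s, t, rfl⟩ := h
  rw [hΘ.1, hΘ.1]
  exact ⟨Θ t, Θ s, by simp [List.append_assoc]⟩

lemma theta_suffix_prefix (hΘ : IsAntimorphism Θ) {p q : List A} (h : p <:+ q) : Θ p <+: Θ q := by
  obtain ⟨s, rfl⟩ := h
  rw [hΘ.1]
  exact ⟨Θ s, rfl⟩

lemma theta_prefix_suffix (hΘ : IsAntimorphism Θ) {p q : List A} (h : p <+: q) : Θ p <:+ Θ q := by
  obtain ⟨s, rfl⟩ := h
  rw [hΘ.1]
  exact ⟨Θ s, rfl⟩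

lemma palSet_finite (w : List A) : (palSet Θ w).Finite := by
  classical
  apply Set.Finite.subset (w.sublists.toFinset : Finset (List A)).finite_toSet
  intro p hp
  simp only [Finset.coe_sort_coe, List.coe_toFinset, Set.mem_setOf_eq, List.mem_sublists]
  exact hp.1.sublist

lemma nil_mem_palSet (hΘ : IsAntimorphism Θ) (w : List A) : [] ∈ palSet Θ w :=
  ⟨List.nil_infix, theta_nil hΘ⟩

lemma palSet_mono {w w' : List A} (h : w <:+: w') : palSet Θ w ⊆ palSet Θ w' :=
  fun _ hp => ⟨hp.1.trans h, hp.2⟩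

@[simp] lemma palSet_nil (hΘ : IsAntimorphism Θ) : palSet Θ ([] : List A) = {[]} := by
  ext p
  simp only [palSet, Set.mem_setOf_eq, Set.mem_singleton_iff]
  constructor
  · rintro ⟨h, -⟩
    exact List.infix_nil.mp h
  · rintro rfl
    exact ⟨List.infix_rfl, theta_nil hΘ⟩

/-- infix of `w ++ [a]` is an infix of `w` or a suffix of `w ++ [a]`. -/
lemma infix_concat_cases {p w : List A} {a : A} (h : p <:+: w ++ [a]) :
    p <:+: w ∨ p <:+ w ++ [a] := by
  obtain ⟨s, t, ht⟩ := h
  rcases List.eq_nil_or_concat t with rfl | ⟨t₀, b, rfl⟩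
  · right
    exact ⟨s, by simpa using ht⟩
  · left
    have h2 : (s ++ p ++ t₀) ++ [b] = w ++ [a] := by
      simpa [List.append_assoc] using ht
    have h3 := List.append_inj' h2 rfl
    exact ⟨s, t₀, by rw [h3.1]⟩

/-- If `p` is a proper prefix of a suffix `P` of `w ++ [a]`, then `p` is an infix of `w`. -/
lemma prefix_suffix_infix {p P w : List A} {a : A} (h1 : p <+: P) (h2 : P <:+ w ++ [a])
    (h3 : p.length < P.length) : p <:+: w := by
  obtain ⟨t, rfl⟩ := h1
  obtain ⟨s, hs⟩ := h2
  have ht : t ≠ [] := by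
    intro h
    subst h
    simp at h3
  rcases List.eq_nil_or_concat t with rfl | ⟨t₀, b, rfl⟩
  · exact absurd rfl ht
  · have h2 : (s ++ p ++ t₀) ++ [b] = w ++ [a] := by
      simpa [List.append_assoc] using hs
    have h4 := List.append_inj' h2 rfl
    exact ⟨s, t₀, by rw [h4.1]⟩

/-- Two "new" palindromic suffixes coincide. -/
lemma new_pal_subsingleton (hΘ : IsAntimorphism Θ) {w : List A} {a : A} {p q : List A}
    (hp : Θ p = p) (hps : p <:+ w ++ [a]) (hpn : ¬ p <:+: w)
    (hq : Θ q = q) (hqs : q <:+ w ++ [a]) (hqn : ¬ q <:+: w) : p = q := by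
  -- wlog length
  have key : ∀ p q : List A, Θ p = p → p <:+ w ++ [a] → ¬ p <:+: w →
      Θ q = q → q <:+ w ++ [a] → p.length ≤ q.length → p = q := by
    intro p q hp hps hpn hq hqs hlen
    -- p is a suffix of q
    have hsuf : p <:+ q := by
      have h1 : p.reverse <+: (w ++ [a]).reverse := List.reverse_prefix.mpr hps
      have h2 : q.reverse <+: (w ++ [a]).reverse := List.reverse_prefix.mpr hqs
      have h3 := List.prefix_of_prefix_length_le h1 h2 (by simpa using hlen)
      have := List.reverse_prefix.mp (by simpa using h3)
      simpa using this
    have hpre : p <+: q := by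
      have := theta_suffix_prefix hΘ hsuf
      rwa [hp, hq] at this
    rcases eq_or_lt_of_le hlen with he | hlt
    · exact List.IsPrefix.eq_of_length hpre he
    · exact absurd (prefix_suffix_infix hpre hqs hlt) hpn
  rcases le_total p.length q.length with h | h
  · exact key p q hp hps hpn hq hqs h
  · exact (key q p hq hqs hqn hp hps h).symm

/-- membership in `palSet (w ++ [a]) \ palSet w`. -/
lemma new_pal_iff {w : List A} {a : A} {p : List A} :
    (p ∈ palSet Θ (w ++ [a]) ∧ p ∉ palSet Θ w) ↔
      (Θ p = p ∧ p <:+ w ++ [a] ∧ ¬ p <:+: w) := by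
  constructor
  · rintro ⟨⟨hinf, hpal⟩, hnot⟩
    have hni : ¬ p <:+: w := fun h => hnot ⟨h, hpal⟩
    rcases infix_concat_cases hinf with h | h
    · exact absurd h hni
    · exact ⟨hpal, h, hni⟩
  · rintro ⟨hpal, hsuf, hni⟩
    exact ⟨⟨hsuf.isInfix, hpal⟩, fun h => hni h.1⟩

end M2

section M3
variable {A : Type*} {Θ : List A → List A}

noncomputable def pcount (Θ : List A → List A) (w : List A) : ℕ := (palSet Θ w).ncard

lemma pcount_nil (hΘ : IsAntimorphism Θ) : pcount Θ ([] : List A) = 1 := by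
  rw [pcount, palSet_nil hΘ]
  simp

lemma pcount_le_of_infix {w w' : List A} (h : w <:+: w') : pcount Θ w ≤ pcount Θ w' :=
  Set.ncard_le_ncard (palSet_mono h) (palSet_finite w')

lemma self_infix_concat (w : List A) (a : A) : w <:+: w ++ [a] := ⟨[], [a], rfl⟩

lemma pcount_concat_le (hΘ : IsAntimorphism Θ) (w : List A) (a : A) :
    pcount Θ (w ++ [a]) ≤ pcount Θ w + 1 := by
  by_cases hN : ∃ p, p ∈ palSet Θ (w ++ [a]) ∧ p ∉ palSet Θ w
  · obtain ⟨L, hL⟩ := hN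
    have hsub : palSet Θ (w ++ [a]) ⊆ insert L (palSet Θ w) := by
      intro p hp
      by_cases hp2 : p ∈ palSet Θ w
      · exact Set.mem_insert_of_mem _ hp2
      · have h1 := new_pal_iff.mp ⟨hp, hp2⟩
        have h2 := new_pal_iff.mp hL
        rw [new_pal_subsingleton hΘ h1.1 h1.2.1 h1.2.2 h2.1 h2.2.1 h2.2.2]
        exact Set.mem_insert _ _
    calc pcount Θ (w ++ [a]) ≤ (insert L (palSet Θ w)).ncard :=
          Set.ncard_le_ncard hsub ((palSet_finite w).insert L)
    _ ≤ pcount Θ w + 1 := Set.ncard_insert_le _ _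
  · push_neg at hN
    have h1 : pcount Θ (w ++ [a]) ≤ pcount Θ w := Set.ncard_le_ncard hN (palSet_finite w)
    omega

lemma pcount_concat_eq (hΘ : IsAntimorphism Θ) {w : List A} {a : A} {p : List A}
    (hpal : Θ p = p) (hsuf : p <:+ w ++ [a]) (hnot : ¬ p <:+: w) :
    pcount Θ (w ++ [a]) = pcount Θ w + 1 := by
  have hmem : p ∈ palSet Θ (w ++ [a]) ∧ p ∉ palSet Θ w := new_pal_iff.mpr ⟨hpal, hsuf, hnot⟩
  have heq : palSet Θ (w ++ [a]) = insert p (palSet Θ w) := by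
    apply Set.Subset.antisymm
    · intro q hq
      by_cases h2 : q ∈ palSet Θ w
      · exact Set.mem_insert_of_mem _ h2
      · have h1 := new_pal_iff.mp ⟨hq, h2⟩
        rw [new_pal_subsingleton hΘ h1.1 h1.2.1 h1.2.2 hpal hsuf hnot]
        exact Set.mem_insert _ _
    · intro q hq
      rcases hq with rfl | hq
      · exact hmem.1
      · exact palSet_mono (self_infix_concat w a) hq
  unfold pcount
  rw [heq, Set.ncard_insert_of_notMem hmem.2 (palSet_finite w)]

lemma exists_new_pal {w : List A} {a : A}
    (hne : pcount Θ (w ++ [a]) ≠ pcount Θ w) :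
    ∃ p, Θ p = p ∧ p <:+ w ++ [a] ∧ ¬ p <:+: w := by
  by_contra hc
  push_neg at hc
  apply hne
  unfold pcount
  congr 1
  apply Set.Subset.antisymm
  · intro p hp
    by_cases h2 : p ∈ palSet Θ w
    · exact h2
    · have h1 := new_pal_iff.mp ⟨hp, h2⟩
      exact absurd h1.2.2 (not_not.mpr (hc p h1.1 h1.2.1))
  · exact palSet_mono (self_infix_concat w a)

lemma pcount_le_length (hΘ : IsAntimorphism Θ) (w : List A) : pcount Θ w ≤ w.length + 1 := by
  induction w using List.reverseRecOn with
  | nil =>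
    rw [pcount_nil hΘ]
    simp
  | append_singleton w a ih =>
    have := pcount_concat_le hΘ w a
    simp only [List.length_append, List.length_singleton]
    omega

noncomputable def Efun (Θ : List A → List A) (w : List A) : ℤ :=
  (w.length : ℤ) + 1 - pcount Θ w

lemma Efun_nil (hΘ : IsAntimorphism Θ) : Efun Θ ([] : List A) = 0 := by
  simp [Efun, pcount_nil hΘ]

lemma Efun_nonneg (hΘ : IsAntimorphism Θ) (w : List A) : 0 ≤ Efun Θ w := by
  have := pcount_le_length hΘ w
  rw [Efun]
  push_cast
  omega

lemma Efun_concat_mono (hΘ : IsAntimorphism Θ) (w : List A) (a : A) :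
    Efun Θ w ≤ Efun Θ (w ++ [a]) := by
  have h1 := pcount_concat_le hΘ w a
  have h2 : pcount Θ w ≤ pcount Θ (w ++ [a]) := pcount_le_of_infix (self_infix_concat w a)
  rw [Efun, Efun]
  simp only [List.length_append, List.length_singleton]
  push_cast
  omega

lemma Efun_append_right_mono (hΘ : IsAntimorphism Θ) (w t : List A) :
    Efun Θ w ≤ Efun Θ (w ++ t) := by
  induction t using List.reverseRecOn with
  | nil => simp
  | append_singleton t a ih =>
    calc Efun Θ w ≤ Efun Θ (w ++ t) := ih
    _ ≤ Efun Θ ((w ++ t) ++ [a]) := Efun_concat_mono hΘ _ a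
    _ = Efun Θ (w ++ (t ++ [a])) := by rw [List.append_assoc]

lemma palSet_theta (hΘ : IsAntimorphism Θ) (w : List A) :
    palSet Θ (Θ w) = Θ '' palSet Θ w := by
  ext p
  constructor
  · rintro ⟨hinf, hpal⟩
    refine ⟨Θ p, ⟨?_, ?_⟩, hΘ.2 p⟩
    · have := theta_infix hΘ hinf
      rwa [hΘ.2] at this
    · rw [hΘ.2, hpal]
  · rintro ⟨q, ⟨hinf, hpal⟩, rfl⟩
    exact ⟨theta_infix hΘ hinf, by rw [hΘ.2, hpal]⟩

lemma pcount_theta (hΘ : IsAntimorphism Θ) (w : List A) : pcount Θ (Θ w) = pcount Θ w := by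
  rw [pcount, pcount, palSet_theta hΘ]
  exact Set.ncard_image_of_injective _ (fun x y h => theta_inj hΘ h)

lemma Efun_theta (hΘ : IsAntimorphism Θ) (w : List A) : Efun Θ (Θ w) = Efun Θ w := by
  rw [Efun, Efun, pcount_theta hΘ, theta_length hΘ]

lemma Efun_append_left_mono (hΘ : IsAntimorphism Θ) (w t : List A) :
    Efun Θ w ≤ Efun Θ (t ++ w) := by
  calc Efun Θ w = Efun Θ (Θ w) := (Efun_theta hΘ w).symm
  _ ≤ Efun Θ (Θ w ++ Θ t) := Efun_append_right_mono hΘ _ _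
  _ = Efun Θ (Θ (t ++ w)) := by rw [hΘ.1]
  _ = Efun Θ (t ++ w) := Efun_theta hΘ _

lemma Efun_infix_mono (hΘ : IsAntimorphism Θ) {w w' : List A} (h : w <:+: w') :
    Efun Θ w ≤ Efun Θ w' := by
  obtain ⟨s, t, rfl⟩ := h
  calc Efun Θ w ≤ Efun Θ (w ++ t) := Efun_append_right_mono hΘ w t
  _ ≤ Efun Θ (s ++ (w ++ t)) := Efun_append_left_mono hΘ _ s
  _ = Efun Θ (s ++ w ++ t) := by rw [List.append_assoc]

end M3

section M4
variable {A : Type*} [Fintype A] {Θ : List A → List A} {u : ℕ → A}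

lemma occursAt'_factorAt (u : ℕ → A) (i n : ℕ) : OccursAt u (factorAt u i n) i := by
  rw [OccursAt, factorAt_length]

lemma isFactorOf'_factorAt (u : ℕ → A) (i n : ℕ) : IsFactorOf (factorAt u i n) u :=
  ⟨i, occursAt'_factorAt u i n⟩

lemma isFactorOf'_of_infix {w w' : List A} (h : w <:+: w') (h2 : IsFactorOf w' u) :
    IsFactorOf w u := by
  obtain ⟨i, hi⟩ := h2
  rw [OccursAt] at hi
  rw [hi] at h
  obtain ⟨d, hd, hp⟩ := infix_factorAt_iff.mp h
  exact ⟨i + d, hp⟩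

lemma nil_isFactorOf' : IsFactorOf ([] : List A) u := ⟨0, by simp [OccursAt]⟩

lemma gamma_le_card (Θ : List A → List A) (w : List A) :
    gammaTheta Θ w ≤ Fintype.card A := by
  have hsub : {P : Set A | ∃ a, a ∈ w ∧ Θ [a] ≠ [a] ∧ P = {b | [b] = [a] ∨ [b] = Θ [a]}} ⊆
      (fun a : A => {b : A | [b] = [a] ∨ [b] = Θ [a]}) '' Set.univ := by
    rintro P ⟨a, -, -, rfl⟩
    exact ⟨a, trivial, rfl⟩
  calc gammaTheta Θ w ≤ ((fun a : A => {b : A | [b] = [a] ∨ [b] = Θ [a]}) '' Set.univ).ncard :=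
        Set.ncard_le_ncard hsub (Set.finite_univ.image _)
  _ ≤ (Set.univ : Set A).ncard := Set.ncard_image_le Set.finite_univ
  _ = Fintype.card A := by rw [Set.ncard_univ, Nat.card_eq_fintype_card]

lemma Efun_eq_defect_add_gamma (Θ : List A → List A) (w : List A) :
    Efun Θ w = defect Θ w + gammaTheta Θ w := by
  unfold Efun defect pcount
  ring

/-- Saturation: beyond a threshold, every one-letter extension of a factor has a
unioccurrent Θ-palindromic suffix. -/
lemma saturation (hΘ : IsAntimorphism Θ) (hrec : UniformlyRecurrent u) (hdef : FiniteDefect Θ u) :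
    ∃ H : ℕ, 0 < H ∧ ∀ g : List A, ∀ a : A, IsFactorOf (g ++ [a]) u → H ≤ g.length →
      ∃ p, Θ p = p ∧ p <:+ g ++ [a] ∧ ¬ p <:+: g := by
  classical
  obtain ⟨C, hC⟩ := hdef
  have hE_le : ∀ w, IsFactorOf w u → Efun Θ w ≤ C + Fintype.card A := by
    intro w hw
    have h1 := hC w hw
    have h2 := gamma_le_card Θ w
    have h3 := Efun_eq_defect_add_gamma Θ w
    have h4 : (gammaTheta Θ w : ℤ) ≤ (Fintype.card A : ℤ) := by exact_mod_cast h2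
    linarith
  set bound : ℕ := (C + Fintype.card A).toNat with hbound
  set P : ℕ → Prop := fun n => ∃ w, IsFactorOf w u ∧ Efun Θ w = n with hP
  have hP0 : P 0 := ⟨[], nil_isFactorOf', by rw [Efun_nil hΘ]; simp⟩
  have hPle : ∀ n, P n → n ≤ bound := by
    rintro n ⟨w, hw, he⟩
    have h1 := hE_le w hw
    rw [he] at h1
    omega
  set Emax := Nat.findGreatest P bound with hEmax
  have hPmax : P Emax := Nat.findGreatest_spec (Nat.zero_le _) hP0
  have hle : ∀ w, IsFactorOf w u → Efun Θ w ≤ (Emax : ℤ) := by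
    intro w hw
    have h0 := Efun_nonneg hΘ w
    have hPw : P (Efun Θ w).toNat := ⟨w, hw, (Int.toNat_of_nonneg h0).symm⟩
    have h2 : (Efun Θ w).toNat ≤ Emax := Nat.le_findGreatest (hPle _ hPw) hPw
    omega
  obtain ⟨z, hz, hzE⟩ := hPmax
  obtain ⟨Rz, hRz⟩ := hrec z hz
  refine ⟨Rz + z.length + 1, by omega, ?_⟩
  intro g a hfac hlen
  have hzg : z <:+: g := by
    obtain ⟨i, hi⟩ := hfac
    rw [OccursAt] at hi
    obtain ⟨j, hj1, hj2, hj3⟩ := hRz i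
    have hg : g = factorAt u i g.length := by
      have hlen2 : (g ++ [a]).length = g.length + 1 := by simp
      rw [hlen2, factorAt_append] at hi
      have := List.append_inj hi (by simp)
      exact this.1
    rw [hg]
    apply infix_factorAt_iff.mpr
    refine ⟨j - i, by omega, ?_⟩
    rw [OccursAt] at hj3
    have hij : i + (j - i) = j := by omega
    rw [hij]
    exact hj3
  have hfg : IsFactorOf g u := isFactorOf'_of_infix (self_infix_concat g a) hfac
  have h1 : Efun Θ g = Emax := by
    have ha := hle g hfg
    have hb : (Emax : ℤ) ≤ Efun Θ g := by
      rw [← hzE]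
      exact Efun_infix_mono hΘ hzg
    omega
  have h2 : Efun Θ (g ++ [a]) = Emax := by
    have ha := hle _ hfac
    have hb : (Emax : ℤ) ≤ Efun Θ (g ++ [a]) := by
      rw [← h1]
      exact Efun_concat_mono hΘ g a
    omega
  apply exists_new_pal
  intro he
  rw [Efun] at h1 h2
  rw [he] at h2
  simp only [List.length_append, List.length_singleton] at h2
  push_cast at h1 h2
  omega

end M4

section M5
variable {A : Type*} [Fintype A] {Θ : List A → List A} {u : ℕ → A}

lemma factorAt_eq_iff {u : ℕ → A} {i j n : ℕ} :
    factorAt u i n = factorAt u j n ↔ ∀ k, k < n → u (i + k) = u (j + k) := by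
  constructor
  · intro h k hk
    have h2 : (factorAt u i n)[k]'(by simpa using hk) =
        (factorAt u j n)[k]'(by simpa using hk) := by
      simp only [h]
    simpa using h2
  · intro h
    apply List.ext_getElem (by simp)
    intro k h1 h2
    simp only [factorAt_getElem]
    exact h k (by simpa using h1)

lemma factorAt_concat (u : ℕ → A) (i m : ℕ) :
    factorAt u i (m + 1) = factorAt u i m ++ [u (i + m)] := by
  rw [factorAt_append]
  have h1 : List.range 1 = [0] := rfl
  simp [factorAt, h1]

/-- key sub-step: a unioccurrent Θ-palindromic suffix of the prefix of length `t + n'`,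
where a copy of the prefix of length `n'` sits at position `t ≥ 1`, must be longer than
that copy; and then mirrors the copy to an occurrence on its left. -/
lemma pal_prefix_exists (hΘ : IsAntimorphism Θ) (hrec : UniformlyRecurrent u) (hdef : FiniteDefect Θ u) :
    ∀ n : ℕ, ∃ m : ℕ, n ≤ m ∧ Θ (factorAt u 0 m) = factorAt u 0 m := by
  obtain ⟨H, hHpos, hsat⟩ := saturation hΘ hrec hdef
  intro n
  set n' := max n (H + 1) with hn'
  have hn'H : H + 1 ≤ n' := le_max_right _ _
  have hn'n : n ≤ n' := le_max_left _ _
  -- occurrences of the prefix of length n' at positive positions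
  obtain ⟨R, hR⟩ := hrec (factorAt u 0 n') (isFactorOf'_factorAt u 0 n')
  have hSne : {i : ℕ | 0 < i ∧ OccursAt u (factorAt u 0 n') i}.Nonempty := by
    obtain ⟨i, hi1, hi2, hi3⟩ := hR 1
    exact ⟨i, by omega, hi3⟩
  set t := sInf {i : ℕ | 0 < i ∧ OccursAt u (factorAt u 0 n') i} with ht
  have htS := Nat.sInf_mem hSne
  rw [← ht] at htS
  have htpos : 0 < t := htS.1
  have htocc : factorAt u 0 n' = factorAt u t n' := by
    have h := htS.2
    rwa [OccursAt, factorAt_length] at h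
  have htmin : ∀ m, 0 < m → OccursAt u (factorAt u 0 n') m → t ≤ m :=
    fun m h1 h2 => Nat.sInf_le ⟨h1, h2⟩
  have hpoint : ∀ k, k < n' → u k = u (t + k) := by
    have h := factorAt_eq_iff.mp htocc
    intro k hk
    simpa using h k hk
  -- first saturation round, at the prefix of length t + n'
  have hsplit : factorAt u 0 (t + n') = factorAt u 0 (t + n' - 1) ++ [u (t + n' - 1)] := by
    have h1 : t + n' = (t + n' - 1) + 1 := by omega
    conv_lhs => rw [h1]
    rw [factorAt_concat]
    simp
  obtain ⟨p, hp_pal, hp_suf, hp_new⟩ := by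
    refine hsat (factorAt u 0 (t + n' - 1)) (u (t + n' - 1)) ?_ ?_
    · rw [← hsplit]; exact isFactorOf'_factorAt u 0 _
    · rw [factorAt_length]; omega
  rw [← hsplit] at hp_suf
  have hp_pos : p = factorAt u (t + n' - p.length) p.length := by
    have h := (suffix_factorAt_iff.mp hp_suf).2
    simpa using h
  have hp_len : p.length ≤ t + n' := (suffix_factorAt_iff.mp hp_suf).1
  -- p is longer than n'
  have hLn' : n' < p.length := by
    by_contra hc
    push_neg at hc
    apply hp_new
    have hocc2' : factorAt u (t + n' - p.length) p.length = factorAt u (n' - p.length) p.length := by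
      apply factorAt_eq_iff.mpr
      intro k hk
      have h1 : n' - p.length + k < n' := by omega
      have h2 := hpoint (n' - p.length + k) h1
      have harith : t + (n' - p.length + k) = t + n' - p.length + k := by omega
      rw [harith] at h2
      exact h2.symm
    have hocc2 : p = factorAt u (n' - p.length) p.length := hp_pos.trans hocc2'
    exact infix_factorAt_iff.mpr ⟨n' - p.length, by omega, by simpa using hocc2⟩
  -- Θ (prefix n') occurs at s := t + n' - p.length < t
  have hpn_suf : factorAt u 0 n' <:+ p := by
    rw [hp_pos]
    apply suffix_factorAt_iff.mpr
    rw [factorAt_length]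
    refine ⟨by omega, ?_⟩
    have harith : t + n' - p.length + (p.length - n') = t := by omega
    rw [harith]
    exact htocc
  have hθlen : (Θ (factorAt u 0 n')).length = n' := by
    rw [theta_length hΘ, factorAt_length]
  have hθocc : OccursAt u (Θ (factorAt u 0 n')) (t + n' - p.length) := by
    have h1 : Θ (factorAt u 0 n') <+: p := by
      have h2 := theta_suffix_prefix hΘ hpn_suf
      rwa [hp_pal] at h2
    rw [hp_pos] at h1
    have h2 := (prefix_factorAt_iff.mp h1).2
    rw [OccursAt, hθlen]
    rw [hθlen] at h2
    exact h2
  -- t' := least occurrence of Θ (prefix n')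
  have hS'ne : {i : ℕ | OccursAt u (Θ (factorAt u 0 n')) i}.Nonempty :=
    ⟨t + n' - p.length, hθocc⟩
  set t' := sInf {i : ℕ | OccursAt u (Θ (factorAt u 0 n')) i} with ht'
  have ht'S := Nat.sInf_mem hS'ne
  rw [← ht'] at ht'S
  have ht's : t' ≤ t + n' - p.length := Nat.sInf_le hθocc
  have ht'occ : Θ (factorAt u 0 n') = factorAt u t' n' := by
    have h := ht'S
    rw [Set.mem_setOf_eq, OccursAt, hθlen] at h
    exact h
  by_cases ht'0 : t' = 0
  · -- the prefix of length n' itself is a Θ-palindrome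
    refine ⟨n', hn'n, ?_⟩
    rw [ht'0] at ht'occ
    exact ht'occ
  · have ht'pos : 0 < t' := Nat.pos_of_ne_zero ht'0
    -- second saturation round, at the prefix of length t' + n'
    have hsplit' : factorAt u 0 (t' + n') = factorAt u 0 (t' + n' - 1) ++ [u (t' + n' - 1)] := by
      have h1 : t' + n' = (t' + n' - 1) + 1 := by omega
      conv_lhs => rw [h1]
      rw [factorAt_concat]
      simp
    obtain ⟨q, hq_pal, hq_suf, hq_new⟩ := by
      refine hsat (factorAt u 0 (t' + n' - 1)) (u (t' + n' - 1)) ?_ ?_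
      · rw [← hsplit']; exact isFactorOf'_factorAt u 0 _
      · rw [factorAt_length]; omega
    rw [← hsplit'] at hq_suf
    have hq_pos : q = factorAt u (t' + n' - q.length) q.length := by
      have h := (suffix_factorAt_iff.mp hq_suf).2
      simpa using h
    have hq_len : q.length ≤ t' + n' := (suffix_factorAt_iff.mp hq_suf).1
    -- q is longer than n'
    have hL'n' : n' < q.length := by
      by_contra hc
      push_neg at hc
      apply hq_new
      -- q is a suffix of the Θ-copy at t', so q = Θ q is a prefix of the original prefix
      have hsuf2 : q <:+ Θ (factorAt u 0 n') := by
        rw [ht'occ, hq_pos]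
        apply suffix_factorAt_iff.mpr
        rw [factorAt_length]
        refine ⟨by omega, ?_⟩
        have harith : t' + (n' - q.length) = t' + n' - q.length := by omega
        rw [harith]
      have hpre2 : q <+: factorAt u 0 n' := by
        have h1 := theta_suffix_prefix hΘ hsuf2
        rwa [hq_pal, hΘ.2] at h1
      have hocc0 : q = factorAt u 0 q.length := (prefix_factorAt_iff.mp hpre2).2
      exact infix_factorAt_iff.mpr ⟨0, by omega, by simpa using hocc0⟩
    by_cases hs'0 : t' + n' - q.length = 0
    · -- the whole prefix of length t' + n' is a Θ-palindrome
      refine ⟨t' + n', by omega, ?_⟩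
      have h1 : q = factorAt u 0 (t' + n') := by
        rw [hq_pos, hs'0]
        congr 1
        omega
      rw [← h1]
      exact hq_pal
    · -- the original prefix occurs at 1 ≤ s' < t' ≤ t + n' - p.length < t : contradiction
      exfalso
      have hθsuf : Θ (factorAt u 0 n') <:+ q := by
        rw [hq_pos, ht'occ]
        apply suffix_factorAt_iff.mpr
        rw [factorAt_length]
        refine ⟨by omega, ?_⟩
        have harith : t' + n' - q.length + (q.length - n') = t' := by omega
        rw [harith]
      have hpnpre : factorAt u 0 n' <+: q := by
        have h1 := theta_suffix_prefix hΘ hθsuf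
        rwa [hΘ.2, hq_pal] at h1
      have hocc_s' : OccursAt u (factorAt u 0 n') (t' + n' - q.length) := by
        rw [hq_pos] at hpnpre
        have h := (prefix_factorAt_iff.mp hpnpre).2
        rw [OccursAt]
        rw [factorAt_length] at h ⊢
        exact h
      have h2 := htmin (t' + n' - q.length) (by omega) hocc_s'
      omega

end M5

section M6
variable {A : Type*} [Fintype A] {Θ : List A → List A} {u : ℕ → A}

/-- KEY LEMMA: complete return words of long Θ-palindromic factors are Θ-palindromes. -/
lemma return_pal (hΘ : IsAntimorphism Θ) {H : ℕ}
    (hsat : ∀ g : List A, ∀ a : A, IsFactorOf (g ++ [a]) u → H ≤ g.length →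
      ∃ p, Θ p = p ∧ p <:+ g ++ [a] ∧ ¬ p <:+: g)
    {w : List A} (hw : Θ w = w) (hwH : H + 1 ≤ w.length)
    {τ τ' : ℕ} (hocc : OccursAt u w τ) (hocc' : OccursAt u w τ') (hlt : τ < τ')
    (hcons : ∀ j, τ < j → j < τ' → ¬ OccursAt u w j) :
    Θ (factorAt u τ (τ' - τ + w.length)) = factorAt u τ (τ' - τ + w.length) := by
  rw [OccursAt] at hocc hocc'
  set M := τ' - τ + w.length with hM
  have hMw : w.length + 1 ≤ M := by omega
  have hpoint : ∀ k, k < w.length → u (τ + k) = u (τ' + k) :=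
    factorAt_eq_iff.mp (hocc.symm.trans hocc')
  have hsplit : factorAt u τ M = factorAt u τ (M - 1) ++ [u (τ + (M - 1))] := by
    have h1 : M = (M - 1) + 1 := by omega
    conv_lhs => rw [h1]
    rw [factorAt_concat]
  obtain ⟨p, hp_pal, hp_suf, hp_new⟩ := by
    refine hsat (factorAt u τ (M - 1)) (u (τ + (M - 1))) ?_ ?_
    · rw [← hsplit]; exact isFactorOf'_factorAt u τ M
    · rw [factorAt_length]; omega
  rw [← hsplit] at hp_suf
  have hp_pos : p = factorAt u (τ + (M - p.length)) p.length :=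
    (suffix_factorAt_iff.mp hp_suf).2
  have hp_len : p.length ≤ M := (suffix_factorAt_iff.mp hp_suf).1
  -- step 1 : p is at least as long as w
  have h1 : w.length ≤ p.length := by
    by_contra hc
    push_neg at hc
    apply hp_new
    -- p is a suffix of the w-copy at τ', i.e. p = factorAt u (τ' + (w.length - p.length)) _,
    -- which by the w-copy at τ also occurs early
    have he' : factorAt u (τ + (M - p.length)) p.length
        = factorAt u (τ + (w.length - p.length)) p.length := by
      apply factorAt_eq_iff.mpr
      intro k hk
      have h3 : w.length - p.length + k < w.length := by omega
      have h4 := hpoint (w.length - p.length + k) h3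
      have ha1 : τ + (w.length - p.length) + k = τ + (w.length - p.length + k) := by omega
      have ha2 : τ + (M - p.length) + k = τ' + (w.length - p.length + k) := by omega
      rw [ha1, ha2, ← h4]
    have he : p = factorAt u (τ + (w.length - p.length)) p.length := hp_pos.trans he'
    exact infix_factorAt_iff.mpr ⟨w.length - p.length, by omega, he⟩
  -- step 2 : if p is shorter than the whole return, we find a forbidden occurrence of w
  have h2 : p.length = M := by
    by_contra hc
    have hpM : p.length < M := by omega
    -- w is a suffix of p (it is the suffix of the whole word of length w.length)
    have hwsuf : w <:+ p := by
      rw [hp_pos]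
      apply suffix_factorAt_iff.mpr
      refine ⟨by omega, ?_⟩
      have ha : τ + (M - p.length) + (p.length - w.length) = τ' := by omega
      rw [ha]
      exact hocc'
    -- hence w = Θ w is a prefix of p, so w occurs at τ + (M - p.length)
    have hwpre : w <+: p := by
      have h3 := theta_suffix_prefix hΘ hwsuf
      rwa [hw, hp_pal] at h3
    have hwocc : OccursAt u w (τ + (M - p.length)) := by
      rw [hp_pos] at hwpre
      have h3 := (prefix_factorAt_iff.mp hwpre).2
      exact h3
    rcases eq_or_lt_of_le h1 with he | hlt2
    · -- p = w, but then w occurs twice in the word while p should be "new"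
      apply hp_new
      have hpw2 : p = w := by
        rw [hp_pos]
        rw [show τ + (M - p.length) = τ' from by omega]
        rw [show p.length = w.length from he.symm]
        exact hocc'.symm
      have hpw : p = factorAt u (τ + 0) p.length := by
        rw [hpw2]
        rw [show w.length = w.length from rfl]
        simpa using hocc
      exact infix_factorAt_iff.mpr ⟨0, by omega, hpw⟩
    · -- w occurs strictly between the two consecutive occurrences : contradiction
      refine hcons (τ + (M - p.length)) (by omega) (by omega) hwocc
  -- conclusion : p is the whole return word
  have h3 : p = factorAt u τ M := by
    rw [hp_pos, h2]
    congr 1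
    omega
  rw [← h3]
  rw [hp_pal]

end M6

section M7
variable {A : Type*} [Fintype A] {Θ : List A → List A} {u : ℕ → A}

/-- next occurrence of `w` strictly after `i`. -/
noncomputable def nxt (u : ℕ → A) (w : List A) (i : ℕ) : ℕ :=
  sInf {j | i < j ∧ OccursAt u w j}

/-- enumeration of the occurrences of the prefix `w` in `u`. -/
noncomputable def tauF (u : ℕ → A) (w : List A) : ℕ → ℕ
  | 0 => 0
  | k + 1 => nxt u w (tauF u w k)

variable {w : List A}

lemma nxt_spec (hne : ∀ i : ℕ, ∃ j, i < j ∧ OccursAt u w j) (i : ℕ) :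
    i < nxt u w i ∧ OccursAt u w (nxt u w i) := by
  have h : {j | i < j ∧ OccursAt u w j}.Nonempty := hne i
  exact Nat.sInf_mem h

lemma nxt_min (i : ℕ) {j : ℕ} (h1 : i < j) (h2 : OccursAt u w j) : nxt u w i ≤ j :=
  Nat.sInf_le ⟨h1, h2⟩

lemma tauF_occ (hne : ∀ i : ℕ, ∃ j, i < j ∧ OccursAt u w j) (hw0 : OccursAt u w 0) :
    ∀ k, OccursAt u w (tauF u w k) := by
  intro k
  cases k with
  | zero => exact hw0
  | succ k => exact (nxt_spec hne (tauF u w k)).2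

lemma tauF_lt (hne : ∀ i : ℕ, ∃ j, i < j ∧ OccursAt u w j) (k : ℕ) :
    tauF u w k < tauF u w (k + 1) :=
  (nxt_spec hne (tauF u w k)).1

lemma tauF_strictMono (hne : ∀ i : ℕ, ∃ j, i < j ∧ OccursAt u w j) :
    StrictMono (tauF u w) :=
  strictMono_nat_of_lt_succ (tauF_lt hne)

lemma tauF_le_self (hne : ∀ i : ℕ, ∃ j, i < j ∧ OccursAt u w j) (k : ℕ) : k ≤ tauF u w k := by
  induction k with
  | zero => exact Nat.zero_le _
  | succ k ih => have := tauF_lt hne k; omega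

lemma tauF_cons (hne : ∀ i : ℕ, ∃ j, i < j ∧ OccursAt u w j) (k : ℕ) :
    ∀ j, tauF u w k < j → j < tauF u w (k + 1) → ¬ OccursAt u w j := by
  intro j h1 h2 hocc
  have h3 := nxt_min (tauF u w k) h1 hocc
  have : tauF u w (k + 1) = nxt u w (tauF u w k) := rfl
  omega

lemma tauF_complete (hne : ∀ i : ℕ, ∃ j, i < j ∧ OccursAt u w j)
    {i : ℕ} (hi : OccursAt u w i) : ∃ k, tauF u w k = i := by
  classical
  set P : ℕ → Prop := fun k => tauF u w k ≤ i with hP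
  have hP0 : P 0 := by simp [hP, tauF]
  have hbd : ∀ k, P k → k ≤ i := fun k hk => le_trans (tauF_le_self hne k) hk
  set k0 := Nat.findGreatest P i with hk0
  have hPk0 : P k0 := Nat.findGreatest_spec (Nat.zero_le _) hP0
  rcases eq_or_lt_of_le hPk0 with he | hlt
  · exact ⟨k0, he⟩
  · exfalso
    have h1 : tauF u w (k0 + 1) ≤ i := nxt_min (tauF u w k0) hlt hi
    have h2 : P (k0 + 1) := h1
    have h3 : k0 + 1 ≤ i := hbd _ h2
    have h4 := Nat.le_findGreatest h3 h2
    omega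

lemma tauF_zero (u : ℕ → A) (w : List A) : tauF u w 0 = 0 := rfl

lemma tauF_add_le (hne : ∀ i : ℕ, ∃ j, i < j ∧ OccursAt u w j) (k d : ℕ) :
    tauF u w k + d ≤ tauF u w (k + d) := by
  induction d with
  | zero => simp
  | succ d ih =>
    have h1 := tauF_lt hne (k + d)
    have ha : k + (d + 1) = (k + d) + 1 := by omega
    rw [ha]
    omega

end M7

section M8
variable {A : Type*} [Fintype A] {u : ℕ → A} {w : List A} {R : ℕ}

/-- encoding of short words over `A` into a `Type 0` finite alphabet. -/
noncomputable def encB (u : ℕ → A) (R : ℕ) (x : List A) :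
    Fin (R + 1) × (Fin R → Fin (Fintype.card A)) :=
  (⟨min x.length R, by omega⟩,
   fun j => if h : (j : ℕ) < x.length then (Fintype.equivFin A) (x.get ⟨j, h⟩)
            else (Fintype.equivFin A) (u 0))

noncomputable def phiB (R : ℕ) (bf : Fin (R + 1) × (Fin R → Fin (Fintype.card A))) : List A :=
  ((List.finRange R).take bf.1.val).map (fun j => (Fintype.equivFin A).symm (bf.2 j))

lemma phiB_encB {x : List A} (h : x.length ≤ R) : phiB R (encB u R x) = x := by
  have hlen : (phiB R (encB u R x)).length = x.length := by
    simp [phiB, encB]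
    omega
  apply List.ext_getElem hlen
  intro k h1 h2
  have hkR : k < R := by
    simp [phiB, encB] at h1
    omega
  have hgr : ((List.finRange R).take (min x.length R))[k]'(by simp; omega) = ⟨k, hkR⟩ := by
    apply Fin.ext
    simp [List.getElem_take, List.getElem_finRange]
  simp only [phiB, encB, List.getElem_map]
  rw [hgr]
  rw [dif_pos (show ((⟨k, hkR⟩ : Fin R) : ℕ) < x.length from h2)]
  simp

/-- the derived word of `u` with respect to the prefix `w`. -/
noncomputable def vW (u : ℕ → A) (w : List A) (R : ℕ) :
    ℕ → Fin (R + 1) × (Fin R → Fin (Fintype.card A)) :=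
  fun k => encB u R (factorAt u (tauF u w k) (tauF u w (k + 1) - tauF u w k))

lemma phiB_vW (hgap : ∀ k, tauF u w (k + 1) - tauF u w k ≤ R) (k : ℕ) :
    phiB R (vW u w R k) = factorAt u (tauF u w k) (tauF u w (k + 1) - tauF u w k) :=
  phiB_encB (by rw [factorAt_length]; exact hgap k)

lemma flat_window (hne : ∀ i : ℕ, ∃ j, i < j ∧ OccursAt u w j)
    (hgap : ∀ k, tauF u w (k + 1) - tauF u w k ≤ R) :
    ∀ l j : ℕ, (factorAt (vW u w R) j l).flatMap (phiB R) =
      factorAt u (tauF u w j) (tauF u w (j + l) - tauF u w j) := by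
  intro l
  induction l with
  | zero => intro j; simp
  | succ l ih =>
    intro j
    rw [factorAt_concat, List.flatMap_append, ih j]
    have h1 : ([vW u w R (j + l)]).flatMap (phiB R) = phiB R (vW u w R (j + l)) := by
      simp
    rw [h1, phiB_vW hgap]
    have h2 : tauF u w j ≤ tauF u w (j + l) := (tauF_strictMono hne).monotone (by omega)
    have h3 : tauF u w (j + l) ≤ tauF u w (j + l + 1) := le_of_lt (tauF_lt hne _)
    have h4 : tauF u w j + (tauF u w (j + l) - tauF u w j) = tauF u w (j + l) := by omega
    have h5 := factorAt_append u (tauF u w j) (tauF u w (j + l) - tauF u w j)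
      (tauF u w (j + l + 1) - tauF u w (j + l))
    rw [h4] at h5
    rw [← h5]
    congr 1
    have ha : j + (l + 1) = (j + l) + 1 := by omega
    rw [ha]
    omega

end M8

section M9
variable {A : Type*} [Fintype A] {u : ℕ → A} {w : List A} {R : ℕ}

/-- the image under the morphism of a word over the derived alphabet, closed by `w`. -/
noncomputable def MwF (w : List A) (R : ℕ) (s : List (Fin (R + 1) × (Fin R → Fin (Fintype.card A)))) :
    List A :=
  s.flatMap (phiB R) ++ w

lemma MwF_nil : MwF w R [] = w := by simp [MwF]

lemma MwF_cons (b : Fin (R + 1) × (Fin R → Fin (Fintype.card A)))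
    (s : List (Fin (R + 1) × (Fin R → Fin (Fintype.card A)))) :
    MwF w R (b :: s) = phiB R b ++ MwF w R s := by
  simp [MwF]

lemma occ_chunk {X Y : List A} {x : ℕ} (h : X ++ Y = factorAt u x (X ++ Y).length) :
    X = factorAt u x X.length ∧ Y = factorAt u (x + X.length) Y.length := by
  have hl : (X ++ Y).length = X.length + Y.length := by simp
  rw [hl, factorAt_append] at h
  refine ⟨(List.append_inj h (by simp)).1, (List.append_inj h (by simp)).2⟩

lemma occ_transfer {g : ℕ} {x y : ℕ} (hagree : ∀ r, r < g → u (x + r) = u (y + r))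
    {p : List A} {o : ℕ} (ho : o + p.length ≤ g)
    (hp : p = factorAt u (x + o) p.length) : p = factorAt u (y + o) p.length := by
  have hmain : factorAt u (x + o) p.length = factorAt u (y + o) p.length := by
    apply factorAt_eq_iff.mpr
    intro k hk
    have h1 : x + o + k = x + (o + k) := by omega
    have h2 : y + o + k = y + (o + k) := by omega
    rw [h1, h2]
    exact hagree (o + k) (by omega)
  exact hp.trans hmain

/-- the image of each derived letter, closed by `w`, is the complete return word. -/
lemma phi_vW_w (hne : ∀ i : ℕ, ∃ j, i < j ∧ OccursAt u w j) (hw0 : OccursAt u w 0)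
    (hgap : ∀ k, tauF u w (k + 1) - tauF u w k ≤ R) (k : ℕ) :
    phiB R (vW u w R k) ++ w =
      factorAt u (tauF u w k) ((tauF u w (k + 1) - tauF u w k) + w.length) := by
  rw [phiB_vW hgap k]
  have hocc := tauF_occ hne hw0 (k + 1)
  rw [OccursAt] at hocc
  have h2 : tauF u w k + (tauF u w (k + 1) - tauF u w k) = tauF u w (k + 1) := by
    have := tauF_lt hne k
    omega
  rw [factorAt_append, h2, ← hocc]

lemma phi_vW_length (hgap : ∀ k, tauF u w (k + 1) - tauF u w k ≤ R) (k : ℕ) :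
    (phiB R (vW u w R k)).length = tauF u w (k + 1) - tauF u w k := by
  rw [phiB_vW hgap k, factorAt_length]

/-- `w` is a prefix of the closed image of any list of occurring letters. -/
lemma w_prefix_MwF (hne : ∀ i : ℕ, ∃ j, i < j ∧ OccursAt u w j) (hw0 : OccursAt u w 0)
    (hgap : ∀ k, tauF u w (k + 1) - tauF u w k ≤ R) :
    ∀ s : List (Fin (R + 1) × (Fin R → Fin (Fintype.card A))),
    (∀ b ∈ s, ∃ k, vW u w R k = b) → w <+: MwF w R s := by
  intro s
  induction s with
  | nil =>
    intro _
    rw [MwF_nil]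
  | cons b s' ih =>
    intro hb
    obtain ⟨k, hk⟩ := hb b (List.mem_cons_self)
    have hIH := ih (fun b' hb' => hb b' (List.mem_cons_of_mem b hb'))
    rw [MwF_cons]
    obtain ⟨X', hX'⟩ := hIH
    have hwp : w <+: phiB R (vW u w R k) ++ w := by
      rw [phi_vW_w hne hw0 hgap k]
      apply prefix_factorAt_iff.mpr
      constructor
      · omega
      · have := tauF_occ hne hw0 k
        rwa [OccursAt] at this
    obtain ⟨Y, hY⟩ := hwp
    rw [← hk]
    refine ⟨Y ++ X', ?_⟩
    rw [← hX', ← List.append_assoc, hY, List.append_assoc]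

/-- main decoding lemma: any occurrence of the closed image of a list of occurring
letters is aligned on the occurrence structure. -/
lemma decode (hne : ∀ i : ℕ, ∃ j, i < j ∧ OccursAt u w j) (hw0 : OccursAt u w 0)
    (hgap : ∀ k, tauF u w (k + 1) - tauF u w k ≤ R) :
    ∀ s : List (Fin (R + 1) × (Fin R → Fin (Fintype.card A))),
    (∀ b ∈ s, ∃ k, vW u w R k = b) →
    ∀ x : ℕ, MwF w R s = factorAt u x (MwF w R s).length →
    ∃ j, tauF u w j = x ∧ ∀ c (hc : c < s.length), vW u w R (j + c) = s.get ⟨c, hc⟩ := by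
  intro s
  induction s with
  | nil =>
    intro _ x hx
    rw [MwF_nil] at hx
    obtain ⟨j, hj⟩ := tauF_complete hne (show OccursAt u w x from hx)
    exact ⟨j, hj, fun c hc => absurd hc (by simp)⟩
  | cons b s' ih =>
    intro hocc x hx
    obtain ⟨k, hk⟩ := hocc b (List.mem_cons_self)
    have hocc' : ∀ b' ∈ s', ∃ k, vW u w R k = b' :=
      fun b' hb' => hocc b' (List.mem_cons_of_mem b hb')
    rw [MwF_cons] at hx
    obtain ⟨hxb, hxs⟩ := occ_chunk hx
    -- w occurs at x
    have hwx : OccursAt u w x := by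
      have h1 : w <+: MwF w R (b :: s') := w_prefix_MwF hne hw0 hgap _ hocc
      rw [MwF_cons] at h1
      rw [hx] at h1
      exact (prefix_factorAt_iff.mp h1).2
    obtain ⟨j, hj⟩ := tauF_complete hne hwx
    -- length of the first block
    set g := (phiB R b).length with hg
    have hg_eq : g = tauF u w (k + 1) - tauF u w k := by
      rw [hg, ← hk, phi_vW_length hgap k]
    have hgpos : 0 < g := by
      have := tauF_lt hne k
      omega
    -- w occurs at x + g
    have hws : OccursAt u w (x + g) := by
      have h1 : w <+: MwF w R s' := w_prefix_MwF hne hw0 hgap _ hocc'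
      rw [hxs] at h1
      exact (prefix_factorAt_iff.mp h1).2
    -- agreement of u on [x, x + g + |w|) and [tauF k, tauF k + g + |w|)
    have hagree : ∀ r, r < g + w.length → u (x + r) = u (tauF u w k + r) := by
      have hbk : factorAt u x g = factorAt u (tauF u w k) g := by
        have h1 : phiB R b = factorAt u (tauF u w k) g := by
          rw [← hk, phiB_vW hgap k, ← hg_eq]
        rw [← h1, ← hxb]
      have h1 := factorAt_eq_iff.mp hbk
      have hocck := tauF_occ hne hw0 (k + 1)
      rw [OccursAt] at hocck hws
      have htk1 : tauF u w (k + 1) = tauF u w k + g := by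
        have := tauF_lt hne k
        omega
      have h2 : factorAt u (x + g) w.length = factorAt u (tauF u w k + g) w.length := by
        rw [← hws, ← htk1, ← hocck]
      have h3 := factorAt_eq_iff.mp h2
      intro r hr
      rcases lt_or_ge r g with h | h
      · exact h1 r h
      · have h4 := h3 (r - g) (by omega)
        have ha1 : x + g + (r - g) = x + r := by omega
        have ha2 : tauF u w k + g + (r - g) = tauF u w k + r := by omega
        rw [ha1, ha2] at h4
        exact h4
    -- x + g is the next occurrence after x = tauF j
    have hnext : tauF u w (j + 1) = x + g := by
      have hle : tauF u w (j + 1) ≤ x + g := by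
        have := nxt_min (tauF u w j) (by omega) hws
        have hdef : tauF u w (j + 1) = nxt u w (tauF u w j) := rfl
        omega
      rcases eq_or_lt_of_le hle with he | hlt2
      · exact he
      · exfalso
        set o := tauF u w (j + 1) - x with ho
        have ho1 : 0 < o := by
          have := tauF_lt hne j
          omega
        have ho2 : o < g := by omega
        -- w occurs at x + o ; transfer to tauF k + o, contradicting consecutiveness at k
        have hwo : w = factorAt u (x + o) w.length := by
          have h1 := tauF_occ hne hw0 (j + 1)
          rw [OccursAt] at h1
          have ha : tauF u w (j + 1) = x + o := by omega
          rwa [ha] at h1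
        have hwo2 : w = factorAt u (tauF u w k + o) w.length :=
          occ_transfer hagree (by omega) hwo
        have htk1 : tauF u w (k + 1) = tauF u w k + g := by
          have := tauF_lt hne k
          omega
        exact tauF_cons hne k (tauF u w k + o) (by omega) (by omega) hwo2
    -- the letter at j is b
    have hvj : vW u w R j = b := by
      have h1 : factorAt u (tauF u w j) (tauF u w (j + 1) - tauF u w j) =
          factorAt u (tauF u w k) (tauF u w (k + 1) - tauF u w k) := by
        rw [hnext, hj]
        have ha : x + g - x = g := by omega
        rw [ha, ← hg_eq]
        have hbk : factorAt u x g = factorAt u (tauF u w k) g := by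
          apply factorAt_eq_iff.mpr
          intro r hr
          exact hagree r (by omega)
        exact hbk
      rw [← hk]
      show encB u R (factorAt u (tauF u w j) (tauF u w (j + 1) - tauF u w j)) =
        encB u R (factorAt u (tauF u w k) (tauF u w (k + 1) - tauF u w k))
      rw [h1]
    -- apply the induction hypothesis to the tail
    obtain ⟨j', hj', hlet⟩ := ih hocc' (x + g) hxs
    have hj'j : j' = j + 1 := by
      have h1 : tauF u w j' = tauF u w (j + 1) := by rw [hj', hnext]
      exact (tauF_strictMono hne).injective h1
    refine ⟨j, hj, ?_⟩
    intro c hc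
    cases c with
    | zero => simpa using hvj
    | succ c =>
      have hc' : c < s'.length := by simpa using hc
      have h1 := hlet c hc'
      rw [hj'j] at h1
      have ha : j + 1 + c = j + (c + 1) := by omega
      rw [ha] at h1
      simpa using h1

end M9

section M10
variable {A : Type*} [Fintype A] {Θ : List A → List A} {u : ℕ → A} {w : List A} {R : ℕ}

lemma MwF_concat (x : List (Fin (R + 1) × (Fin R → Fin (Fintype.card A))))
    (b : Fin (R + 1) × (Fin R → Fin (Fintype.card A))) :
    MwF w R (x ++ [b]) = x.flatMap (phiB R) ++ (phiB R b ++ w) := by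
  simp [MwF]

lemma window_letters_occ (j l : ℕ) :
    ∀ b ∈ factorAt (vW u w R) j l, ∃ k, vW u w R k = b := by
  intro b hb
  simp only [factorAt, List.mem_map, List.mem_range] at hb
  obtain ⟨k, -, hk⟩ := hb
  exact ⟨j + k, hk⟩

lemma window_MwF (hne : ∀ i : ℕ, ∃ j, i < j ∧ OccursAt u w j) (hw0 : OccursAt u w 0)
    (hgap : ∀ k, tauF u w (k + 1) - tauF u w k ≤ R) (j l : ℕ) :
    MwF w R (factorAt (vW u w R) j l) =
      factorAt u (tauF u w j) ((tauF u w (j + l) - tauF u w j) + w.length) := by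
  rw [MwF, flat_window hne hgap l j]
  have hocc := tauF_occ hne hw0 (j + l)
  rw [OccursAt] at hocc
  have h2 : tauF u w j + (tauF u w (j + l) - tauF u w j) = tauF u w (j + l) := by
    have := (tauF_strictMono hne).monotone (show j ≤ j + l by omega)
    omega
  rw [factorAt_append, h2, ← hocc]

lemma MwF_length (s : List (Fin (R + 1) × (Fin R → Fin (Fintype.card A)))) :
    (MwF w R s).length = (s.flatMap (phiB R)).length + w.length := by
  simp [MwF]

/-- decoding, window form: a list of occurring letters whose closed image coincides with
that of a window must be that window. -/
lemma window_eq_of_MwF_eq (hne : ∀ i : ℕ, ∃ j, i < j ∧ OccursAt u w j) (hw0 : OccursAt u w 0)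
    (hgap : ∀ k, tauF u w (k + 1) - tauF u w k ≤ R)
    {s' : List (Fin (R + 1) × (Fin R → Fin (Fintype.card A)))}
    (hocc : ∀ b ∈ s', ∃ k, vW u w R k = b) {j l : ℕ}
    (h : MwF w R s' = MwF w R (factorAt (vW u w R) j l)) :
    s' = factorAt (vW u w R) j l := by
  have hWnd := window_MwF hne hw0 hgap (j := j) (l := l)
  have hx : MwF w R s' = factorAt u (tauF u w j) (MwF w R s').length := by
    rw [h, hWnd, factorAt_length]
  obtain ⟨j0, hj0, hlet⟩ := decode hne hw0 hgap s' hocc (tauF u w j) hx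
  have hj0j : j0 = j := (tauF_strictMono hne).injective (by rw [hj0])
  subst hj0j
  -- s' is the window of its own length
  have hs'win : s' = factorAt (vW u w R) j0 s'.length := by
    apply List.ext_getElem (by simp)
    intro c h1 h2
    have h3 := hlet c h1
    simp only [factorAt_getElem]
    simpa [List.get_eq_getElem] using h3.symm
  -- lengths agree
  have hlen : s'.length = l := by
    have h1 : (MwF w R s').length = (MwF w R (factorAt (vW u w R) j0 l)).length := by rw [h]
    rw [hs'win] at h1
    rw [window_MwF hne hw0 hgap, window_MwF hne hw0 hgap] at h1
    rw [factorAt_length, factorAt_length] at h1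
    have h2 : tauF u w (j0 + s'.length) = tauF u w (j0 + l) := by
      have ha := (tauF_strictMono hne).monotone (show j0 ≤ j0 + s'.length by omega)
      have hb := (tauF_strictMono hne).monotone (show j0 ≤ j0 + l by omega)
      omega
    have h3 := (tauF_strictMono hne).injective h2
    omega
  rw [hs'win, hlen]

/-- each complete return word (closed image of a derived letter) is a Θ-palindrome. -/
lemma CR_pal (hΘ : IsAntimorphism Θ) {H : ℕ}
    (hsat : ∀ g : List A, ∀ a : A, IsFactorOf (g ++ [a]) u → H ≤ g.length →
      ∃ p, Θ p = p ∧ p <:+ g ++ [a] ∧ ¬ p <:+: g)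
    (hw : Θ w = w) (hwH : H + 1 ≤ w.length)
    (hne : ∀ i : ℕ, ∃ j, i < j ∧ OccursAt u w j) (hw0 : OccursAt u w 0)
    (hgap : ∀ k, tauF u w (k + 1) - tauF u w k ≤ R) (k : ℕ) :
    Θ (phiB R (vW u w R k) ++ w) = phiB R (vW u w R k) ++ w := by
  rw [phi_vW_w hne hw0 hgap k]
  exact return_pal hΘ hsat hw hwH (tauF_occ hne hw0 k) (tauF_occ hne hw0 (k + 1))
    (tauF_lt hne k) (tauF_cons hne k)

/-- Θ of a closed image is the closed image of the reversal. -/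
lemma theta_MwF (hΘ : IsAntimorphism Θ) {H : ℕ}
    (hsat : ∀ g : List A, ∀ a : A, IsFactorOf (g ++ [a]) u → H ≤ g.length →
      ∃ p, Θ p = p ∧ p <:+ g ++ [a] ∧ ¬ p <:+: g)
    (hw : Θ w = w) (hwH : H + 1 ≤ w.length)
    (hne : ∀ i : ℕ, ∃ j, i < j ∧ OccursAt u w j) (hw0 : OccursAt u w 0)
    (hgap : ∀ k, tauF u w (k + 1) - tauF u w k ≤ R) :
    ∀ s : List (Fin (R + 1) × (Fin R → Fin (Fintype.card A))),
    (∀ b ∈ s, ∃ k, vW u w R k = b) → Θ (MwF w R s) = MwF w R s.reverse := by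
  intro s
  induction s with
  | nil =>
    intro _
    rw [MwF_nil]
    simpa [MwF_nil] using hw
  | cons b s' ih =>
    intro hb
    obtain ⟨k, hk⟩ := hb b (List.mem_cons_self)
    have hIH := ih (fun b' hb' => hb b' (List.mem_cons_of_mem b hb'))
    rw [MwF_cons, hΘ.1, hIH]
    have hrev : (b :: s').reverse = s'.reverse ++ [b] := by simp
    rw [hrev, MwF_concat]
    -- w ++ Θ (phiB R b) = phiB R b ++ w
    have hconj : w ++ Θ (phiB R b) = phiB R b ++ w := by
      have h1 := CR_pal hΘ hsat hw hwH hne hw0 hgap k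
      rw [hk] at h1
      have h2 : Θ (phiB R b ++ w) = Θ w ++ Θ (phiB R b) := hΘ.1 _ _
      rw [hw] at h2
      rw [← h2, h1]
    rw [MwF]
    rw [List.append_assoc, hconj]

end M10

section M11
variable {A : Type*} [Fintype A] {Θ : List A → List A} {u : ℕ → A} {w : List A} {R : ℕ}

/-- richness core: every one-letter extension of a factor of the derived word has a
unioccurrent reversal-palindromic suffix. -/
lemma R1 (hΘ : IsAntimorphism Θ) {H : ℕ}
    (hsat : ∀ g : List A, ∀ a : A, IsFactorOf (g ++ [a]) u → H ≤ g.length →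
      ∃ p, Θ p = p ∧ p <:+ g ++ [a] ∧ ¬ p <:+: g)
    (hw : Θ w = w) (hwH : H + 1 ≤ w.length)
    (hne : ∀ i : ℕ, ∃ j, i < j ∧ OccursAt u w j) (hw0 : OccursAt u w 0)
    (hgap : ∀ k, tauF u w (k + 1) - tauF u w k ≤ R) (j l : ℕ) :
    ∃ t' : List (Fin (R + 1) × (Fin R → Fin (Fintype.card A))),
      t'.reverse = t' ∧ t' <:+ factorAt (vW u w R) j (l + 1) ∧
        ¬ t' <:+: factorAt (vW u w R) j l := by
  have hmono := tauF_strictMono hne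
  have hτll1 : tauF u w (j + l) < tauF u w (j + l + 1) := hmono (by omega)
  have hτjl : tauF u w j ≤ tauF u w (j + l) := hmono.monotone (by omega)
  have hτjl1 : tauF u w j < tauF u w (j + l + 1) := by omega
  -- the closed image of the extended window
  have hK := window_MwF hne hw0 hgap (j := j) (l := l + 1) (u := u) (R := R)
  rw [show j + (l + 1) = j + l + 1 from by omega] at hK
  set LK := tauF u w (j + l + 1) - tauF u w j + w.length with hLK
  have hLKw : w.length + 1 ≤ LK := by omega
  -- saturation
  have hsplitK : factorAt u (tauF u w j) LK =
      factorAt u (tauF u w j) (LK - 1) ++ [u (tauF u w j + (LK - 1))] := by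
    have h1 : LK = (LK - 1) + 1 := by omega
    conv_lhs => rw [h1]
    rw [factorAt_concat]
  obtain ⟨P, hP_pal, hP_suf, hP_new⟩ := by
    refine hsat (factorAt u (tauF u w j) (LK - 1)) (u (tauF u w j + (LK - 1))) ?_ ?_
    · rw [← hsplitK]; exact isFactorOf'_factorAt u _ _
    · rw [factorAt_length]; omega
  rw [← hsplitK] at hP_suf
  have hP_pos : P = factorAt u (tauF u w j + (LK - P.length)) P.length :=
    (suffix_factorAt_iff.mp hP_suf).2
  have hP_len : P.length ≤ LK := (suffix_factorAt_iff.mp hP_suf).1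
  -- agreement between the w-copy at the end and the w-copy at the front
  have hwj := tauF_occ hne hw0 j
  have hwjl1 := tauF_occ hne hw0 (j + l + 1)
  rw [OccursAt] at hwj hwjl1
  have hagree : ∀ r, r < w.length → u (tauF u w (j + l + 1) + r) = u (tauF u w j + r) :=
    factorAt_eq_iff.mp (hwjl1.symm.trans hwj)
  -- step 1 : P at least as long as w
  have h1 : w.length ≤ P.length := by
    by_contra hc
    push_neg at hc
    apply hP_new
    have he0 : P = factorAt u (tauF u w (j + l + 1) + (w.length - P.length)) P.length := by
      have harith : tauF u w (j + l + 1) + (w.length - P.length) =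
          tauF u w j + (LK - P.length) := by omega
      rw [harith]
      exact hP_pos
    have he : P = factorAt u (tauF u w j + (w.length - P.length)) P.length :=
      occ_transfer hagree (by omega) he0
    exact infix_factorAt_iff.mpr ⟨w.length - P.length, by omega, he⟩
  -- step 2 : the start of P is an occurrence of w
  have hwsufP : w <:+ P := by
    rw [hP_pos]
    apply suffix_factorAt_iff.mpr
    refine ⟨by omega, ?_⟩
    have ha : tauF u w j + (LK - P.length) + (P.length - w.length) = tauF u w (j + l + 1) := by
      omega
    rw [ha]
    exact hwjl1
  have hwpreP : w <+: P := by
    have h3 := theta_suffix_prefix hΘ hwsufP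
    rwa [hw, hP_pal] at h3
  have hwoccP : OccursAt u w (tauF u w j + (LK - P.length)) := by
    rw [hP_pos] at hwpreP
    exact (prefix_factorAt_iff.mp hwpreP).2
  obtain ⟨k, hk⟩ := tauF_complete hne hwoccP
  have hkj : j ≤ k := by
    by_contra hc
    push_neg at hc
    have := hmono hc
    omega
  have hkjl1 : k ≤ j + l + 1 := by
    by_contra hc
    push_neg at hc
    have := hmono hc
    omega
  -- the candidate palindromic suffix of the derived window
  set t' := factorAt (vW u w R) k (j + l + 1 - k) with ht'
  have hMt' : MwF w R t' = factorAt u (tauF u w k) (tauF u w (j + l + 1) - tauF u w k + w.length) := by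
    rw [ht', window_MwF hne hw0 hgap]
    rw [show k + (j + l + 1 - k) = j + l + 1 from by omega]
  have hMP : MwF w R t' = P := by
    rw [hMt', hP_pos, hk]
    congr 1
    omega
  have hlt' : t'.length = j + l + 1 - k := by rw [ht', factorAt_length]
  -- t' is a reversal palindrome
  have ht'occ : ∀ b ∈ t', ∃ k0, vW u w R k0 = b := by
    rw [ht']
    exact window_letters_occ k (j + l + 1 - k)
  have ht'rev_occ : ∀ b ∈ t'.reverse, ∃ k0, vW u w R k0 = b := by
    intro b hb
    exact ht'occ b (List.mem_reverse.mp hb)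
  have ht'pal : t'.reverse = t' := by
    have h2 : MwF w R t'.reverse = MwF w R t' := by
      rw [← theta_MwF hΘ hsat hw hwH hne hw0 hgap t' ht'occ, hMP, hP_pal]
    rw [ht'] at h2 ⊢
    exact window_eq_of_MwF_eq hne hw0 hgap ht'rev_occ h2
  refine ⟨t', ht'pal, ?_, ?_⟩
  · -- t' is a suffix of the extended window
    have hdrop : (factorAt (vW u w R) j (l + 1)).drop (k - j) = t' := by
      rw [factorAt_drop, ht']
      rw [show j + (k - j) = k from by omega, show l + 1 - (k - j) = j + l + 1 - k from by omega]
    rw [← hdrop]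
    exact List.drop_suffix _ _
  · -- t' does not occur in the shorter window
    intro hinf
    obtain ⟨d, hd, hpos⟩ := infix_factorAt_iff.mp hinf
    rw [hlt'] at hd hpos
    -- the closed image of t' would then occur strictly inside the saturated prefix
    have hMt'2 : MwF w R t' =
        factorAt u (tauF u w (j + d)) (tauF u w (j + d + (j + l + 1 - k)) - tauF u w (j + d) + w.length) := by
      have hwin : t' = factorAt (vW u w R) (j + d) (j + l + 1 - k) := hpos
      rw [hwin, window_MwF hne hw0 hgap]
    apply hP_new
    have hfact1 : tauF u w (j + d) ≤ tauF u w (j + d + (j + l + 1 - k)) := hmono.monotone (by omega)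
    have hfact2 : tauF u w (j + d + (j + l + 1 - k)) ≤ tauF u w (j + l) := hmono.monotone (by omega)
    have hfact3 : tauF u w j ≤ tauF u w (j + d) := hmono.monotone (by omega)
    have hPlen : P.length = tauF u w (j + l + 1) - tauF u w k + w.length := by
      rw [← hMP, hMt', factorAt_length]
    have hlen2 : tauF u w (j + d + (j + l + 1 - k)) - tauF u w (j + d) =
        tauF u w (j + l + 1) - tauF u w k := by
      have ha := congrArg List.length hMt'
      have hb := congrArg List.length hMt'2
      rw [factorAt_length] at ha hb
      omega
    have hPocc : P = factorAt u (tauF u w j + (tauF u w (j + d) - tauF u w j)) P.length := by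
      rw [show tauF u w j + (tauF u w (j + d) - tauF u w j) = tauF u w (j + d) from by omega]
      rw [← hMP, hMt'2]
      congr 1
      rw [factorAt_length]
    refine infix_factorAt_iff.mpr ⟨tauF u w (j + d) - tauF u w j, ?_, hPocc⟩
    rw [hPlen]
    omega

end M11

section M12
variable {A : Type*} [Fintype A] {Θ : List A → List A} {u : ℕ → A} {w : List A} {R : ℕ}

lemma rev_antimorphism (B' : Type*) : IsAntimorphism (fun l : List B' => l.reverse) :=
  ⟨fun x y => List.reverse_append (as := x) (bs := y), fun x => List.reverse_reverse x⟩

lemma gamma_rev {B' : Type*} (s : List B') :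
    gammaTheta (fun l : List B' => l.reverse) s = 0 := by
  unfold gammaTheta
  convert Set.ncard_empty (Set B')
  apply Set.eq_empty_iff_forall_notMem.mpr
  rintro P ⟨a, -, hne, -⟩
  exact hne rfl

/-- palindromic counting in the derived word: every window is rich. -/
lemma vW_pcount (hΘ : IsAntimorphism Θ) {H : ℕ}
    (hsat : ∀ g : List A, ∀ a : A, IsFactorOf (g ++ [a]) u → H ≤ g.length →
      ∃ p, Θ p = p ∧ p <:+ g ++ [a] ∧ ¬ p <:+: g)
    (hw : Θ w = w) (hwH : H + 1 ≤ w.length)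
    (hne : ∀ i : ℕ, ∃ j, i < j ∧ OccursAt u w j) (hw0 : OccursAt u w 0)
    (hgap : ∀ k, tauF u w (k + 1) - tauF u w k ≤ R) :
    ∀ l j : ℕ, pcount (fun s : List (Fin (R + 1) × (Fin R → Fin (Fintype.card A))) => s.reverse)
      (factorAt (vW u w R) j l) = l + 1 := by
  intro l
  induction l with
  | zero =>
    intro j
    simp only [factorAt_zero]
    rw [pcount_nil (rev_antimorphism _)]
  | succ l ih =>
    intro j
    obtain ⟨t', ht'pal, ht'suf, ht'new⟩ := R1 hΘ hsat hw hwH hne hw0 hgap j l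
    rw [factorAt_concat] at ht'suf ⊢
    rw [pcount_concat_eq (rev_antimorphism _) ht'pal ht'suf ht'new, ih j]

/-- the derived word is uniformly recurrent. -/
lemma vW_UR (hrec : UniformlyRecurrent u)
    (hne : ∀ i : ℕ, ∃ j, i < j ∧ OccursAt u w j) (hw0 : OccursAt u w 0)
    (hgap : ∀ k, tauF u w (k + 1) - tauF u w k ≤ R) :
    UniformlyRecurrent (vW u w R) := by
  intro s hs
  obtain ⟨j, hj⟩ := hs
  rw [OccursAt] at hj
  -- the closed image of s is a factor of u
  have hfac : IsFactorOf (MwF w R s) u := by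
    refine ⟨tauF u w j, ?_⟩
    rw [OccursAt]
    conv_lhs => rw [hj]
    rw [window_MwF hne hw0 hgap]
    congr 1
    rw [hj, window_MwF hne hw0 hgap, factorAt_length]
    rw [factorAt_length]
  obtain ⟨R₀, hR₀⟩ := hrec (MwF w R s) hfac
  refine ⟨R₀ + 1, ?_⟩
  intro N
  obtain ⟨x, hx1, hx2, hx3⟩ := hR₀ (tauF u w N)
  rw [OccursAt] at hx3
  have hsocc : ∀ b ∈ s, ∃ k, vW u w R k = b := by
    rw [hj]
    exact window_letters_occ j s.length
  obtain ⟨j', hj', hlet⟩ := decode hne hw0 hgap s hsocc x hx3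
  have hmono := tauF_strictMono hne
  have hNj' : N ≤ j' := by
    by_contra hc
    push_neg at hc
    have := hmono hc
    omega
  have hup : j' < N + (R₀ + 1) := by
    have h2 := tauF_add_le hne N (j' - N)
    rw [show N + (j' - N) = j' from by omega] at h2
    omega
  refine ⟨j', hNj', hup, ?_⟩
  rw [OccursAt]
  apply List.ext_getElem (by simp)
  intro c h1 h2
  have h3 := hlet c h1
  simp only [factorAt_getElem]
  simpa [List.get_eq_getElem] using h3.symm

end M12


end AlmostRich


open AlmostRich in
/-- **Theorem 2.** Any uniformly recurrent almost `Θ`-rich word `u` is a morphic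
image of a uniformly recurrent word `v` which is rich with respect to the
reversal map. -/
theorem unif_recurrent_almost_rich_is_morphic_image_of_reversal_rich
    {A : Type*} [Fintype A] (Θ : List A → List A) (hΘ : IsAntimorphism Θ)
    (u : ℕ → A) (hrec : UniformlyRecurrent u) (hdef : FiniteDefect Θ u) :
    ∃ (B : Type), Finite B ∧
      ∃ (φ : B → List A) (v : ℕ → B),
        UniformlyRecurrent v ∧ IsMorphicImage u φ v ∧
          RichWord (fun w : List B => w.reverse) v := by
  classical
  obtain ⟨H, hHpos, hsat⟩ := AlmostRich.saturation hΘ hrec hdef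
  obtain ⟨m, hm, hwpal⟩ := AlmostRich.pal_prefix_exists hΘ hrec hdef (H + 1)
  set w := factorAt u 0 m with hwdef
  have hw : Θ w = w := hwpal
  have hwH : H + 1 ≤ w.length := by
    rw [hwdef, AlmostRich.factorAt_length]; exact hm
  have hw0 : OccursAt u w 0 := AlmostRich.occursAt'_factorAt u 0 m
  obtain ⟨Rw, hRw⟩ := hrec w ⟨0, hw0⟩
  have hne : ∀ i : ℕ, ∃ j, i < j ∧ OccursAt u w j := by
    intro i
    obtain ⟨j, h1, h2, h3⟩ := hRw (i + 1)
    exact ⟨j, by omega, h3⟩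
  have hgap : ∀ k, tauF u w (k + 1) - tauF u w k ≤ Rw := by
    intro k
    obtain ⟨i, h1, h2, h3⟩ := hRw (tauF u w k + 1)
    have h4 := AlmostRich.nxt_min (tauF u w k) (by omega) h3
    have h5 : tauF u w (k + 1) = nxt u w (tauF u w k) := rfl
    omega
  refine ⟨Fin (Rw + 1) × (Fin Rw → Fin (Fintype.card A)), by infer_instance,
    phiB Rw, vW u w Rw, ?_, ⟨?_, ?_⟩, ?_⟩
  · exact AlmostRich.vW_UR hrec hne hw0 hgap
  · intro n
    have h2 : (prefixWord (vW u w Rw) n).flatMap (phiB Rw) = factorAt u 0 (tauF u w n) := by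
      have h1 : prefixWord (vW u w Rw) n = factorAt (vW u w Rw) 0 n := rfl
      rw [h1, AlmostRich.flat_window hne hgap n 0]
      simp [AlmostRich.tauF_zero]
    rw [h2]
    exact AlmostRich.occursAt'_factorAt u 0 _
  · intro N
    refine ⟨N, ?_⟩
    have h2 : (prefixWord (vW u w Rw) N).flatMap (phiB Rw) = factorAt u 0 (tauF u w N) := by
      have h1 : prefixWord (vW u w Rw) N = factorAt (vW u w Rw) 0 N := rfl
      rw [h1, AlmostRich.flat_window hne hgap N 0]
      simp [AlmostRich.tauF_zero]
    rw [h2, AlmostRich.factorAt_length]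
    exact AlmostRich.tauF_le_self hne N
  · intro s hs
    have h1 : (palSet (fun l : List (Fin (Rw + 1) × (Fin Rw → Fin (Fintype.card A))) =>
        l.reverse) s).ncard = s.length + 1 := by
      obtain ⟨j, hj⟩ := hs
      rw [OccursAt] at hj
      have h2 := AlmostRich.vW_pcount hΘ hsat hw hwH hne hw0 hgap s.length j
      rw [← hj] at h2
      exact h2
    have h3 := AlmostRich.gamma_rev (B' := Fin (Rw + 1) × (Fin Rw → Fin (Fintype.card A))) s
    unfold defect
    rw [h1, h3]
    push_cast
    ring
end

section
/- Let Θ : A* → A* be an involutive antimorphism and let u ∈ A^ℕ be a recurrent infinite word with finite Θ-palindromic defect. Then the language L(u) is closed under Θ, i.e., for every factor w of u, Θ(w) is also a factor of u. -/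
section Basic
variable {A : Type*}

theorem factorAt_length (u : ℕ → A) (i n : ℕ) : (factorAt u i n).length = n := by
  simp [factorAt]

theorem factorAt_getElem (u : ℕ → A) {i n k : ℕ} (h : k < n) :
    (factorAt u i n)[k]'(by simp [factorAt_length, h]) = u (i + k) := by
  simp [factorAt]

theorem factorAt_add (u : ℕ → A) (i a b : ℕ) :
    factorAt u i (a + b) = factorAt u i a ++ factorAt u (i + a) b := by
  simp only [factorAt, List.range_add, List.map_append, List.map_map]
  congr 1
  apply List.map_congr_left
  intro k _
  simp [Nat.add_assoc]

theorem occursAt_iff {u : ℕ → A} {w : List A} {i : ℕ} :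
    OccursAt u w i ↔ ∀ k, (h : k < w.length) → w[k] = u (i + k) := by
  constructor
  · intro h k hk
    have : w[k] = (factorAt u i w.length)[k]'(by simp [factorAt_length, hk]) := by
      congr 1
    rw [this, factorAt_getElem u hk]
  · intro h
    apply List.ext_getElem (by simp [factorAt_length])
    intro k h1 h2
    rw [factorAt_getElem u (by simpa [factorAt_length] using h2)]
    exact h k h1

theorem prefixWord_factor (u : ℕ → A) (n : ℕ) : IsFactorOf (prefixWord u n) u := by
  refine ⟨0, ?_⟩
  unfold OccursAt prefixWord
  rw [factorAt_length]

theorem factorOf_infix {u : ℕ → A} {w w' : List A} (hi : w' <:+: w)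
    (hf : IsFactorOf w u) : IsFactorOf w' u := by
  obtain ⟨i, hocc⟩ := hf
  obtain ⟨x, y, hxy⟩ := hi
  refine ⟨i + x.length, ?_⟩
  rw [occursAt_iff]
  intro k hk
  have h1 : w'[k]'hk = w[x.length + k]'(by subst hxy; simp; omega) := by
    subst hxy
    rw [List.getElem_append_left (by simp; omega), List.getElem_append_right (by omega)]
    congr 1; omega
  rw [h1, occursAt_iff.mp hocc (x.length + k) (by subst hxy; simp; omega)]
  congr 1; omega

theorem theta_nil {Θ : List A → List A} (hΘ : IsAntimorphism Θ) : Θ [] = [] := by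
  have := hΘ.1 [] []
  simp at this
  exact this

theorem occursIn_prefixWord_iff {u : ℕ → A} {q : List A} {n i : ℕ} :
    OccursIn q (prefixWord u n) i ↔ i + q.length ≤ n ∧ OccursAt u q i := by
  unfold OccursIn prefixWord
  rw [factorAt_length]
  constructor
  · rintro ⟨h1, h2⟩
    refine ⟨h1, ?_⟩
    rw [occursAt_iff]
    intro k hk
    rw [List.getElem_of_eq h2 hk]
    simp only [List.getElem_take, List.getElem_drop]
    rw [factorAt_getElem u (by omega)]
    congr 1; omega
  · rintro ⟨h1, h2⟩
    refine ⟨h1, ?_⟩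
    apply List.ext_getElem (by simp [factorAt_length]; omega)
    intro k hk1 hk2
    simp only [List.getElem_take, List.getElem_drop]
    rw [factorAt_getElem u (by omega), occursAt_iff.mp h2 k hk1]
    congr 1; omega

theorem suffix_prefixWord_iff {u : ℕ → A} {q : List A} {n : ℕ} :
    q <:+ prefixWord u n ↔ q.length ≤ n ∧ OccursAt u q (n - q.length) := by
  constructor
  · intro h
    have hlen : q.length ≤ n := by
      have := h.length_le; simpa [prefixWord, factorAt_length] using this
    have : OccursIn q (prefixWord u n) (n - q.length) := by
      obtain ⟨x, hx⟩ := h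
      have hxl : x.length = n - q.length := by
        have := congrArg List.length hx
        simp [prefixWord, factorAt_length] at this; omega
      constructor
      · simp [prefixWord, factorAt_length]; omega
      · rw [← hx, ← hxl, List.drop_left, List.take_length]
    exact ⟨hlen, (occursIn_prefixWord_iff.mp this).2⟩
  · rintro ⟨h1, h2⟩
    have : OccursIn q (prefixWord u n) (n - q.length) :=
      occursIn_prefixWord_iff.mpr ⟨by omega, h2⟩
    obtain ⟨hle, heq⟩ := this
    have hd : (List.drop (n - q.length) (prefixWord u n)).length = q.length := by
      simp [prefixWord, factorAt_length]; omega
    rw [heq, List.take_of_length_le (by omega)]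
    exact List.drop_suffix _ _

theorem theta_infix {Θ : List A → List A} (hΘ : IsAntimorphism Θ) {w q : List A}
    (h : w <:+: q) : Θ w <:+: Θ q := by
  obtain ⟨x, y, hxy⟩ := h
  refine ⟨Θ y, Θ x, ?_⟩
  rw [← hxy, hΘ.1, hΘ.1, List.append_assoc]

theorem pal_suffix_prefix {Θ : List A → List A} (hΘ : IsAntimorphism Θ) {q q' : List A}
    (hq : Θ q = q) (hq' : Θ q' = q') (h : q <:+ q') : q <+: q' := by
  obtain ⟨x, hx⟩ := h
  refine ⟨Θ x, ?_⟩
  rw [← hq, ← hΘ.1, hx, hq']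

theorem factorAt_infix (u : ℕ → A) {i n i' n' : ℕ} (h1 : i ≤ i') (h2 : i' + n' ≤ i + n) :
    factorAt u i' n' <:+: factorAt u i n := by
  have : n = (i' - i) + (n' + (i + n - i' - n')) := by omega
  rw [this, factorAt_add, factorAt_add]
  have hi' : i + (i' - i) = i' := by omega
  rw [hi']
  exact ⟨_, _, by rw [List.append_assoc]⟩

theorem finite_of_bounded_ncard (s : Set ℕ) (K : ℕ)
    (h : ∀ n, (s ∩ Set.Iic n).ncard ≤ K) : s.Finite := by
  by_contra hinf
  replace hinf : s.Infinite := hinf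
  obtain ⟨t, hts, htc⟩ := hinf.exists_subset_card_eq (K + 1)
  have hne : t.Nonempty := Finset.card_pos.mp (by omega)
  set n := t.max' hne
  have hsub : (t : Set ℕ) ⊆ s ∩ Set.Iic n := by
    intro x hx
    exact ⟨hts hx, Finset.le_max' t x hx⟩
  have := Set.ncard_le_ncard hsub (Set.Finite.subset (Set.finite_Iic n) (Set.inter_subset_right))
  rw [Set.ncard_coe_finset] at this
  have hK := h n
  omega

theorem palSet_finite (Θ : List A → List A) (w : List A) : (palSet Θ w).Finite := by
  apply Set.Finite.subset (w.sublists.finite_toSet)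
  intro p hp
  simpa using hp.1.sublist

theorem nil_mem_palSet {Θ : List A → List A} (hΘ : IsAntimorphism Θ) (w : List A) :
    [] ∈ palSet Θ w := ⟨List.nil_infix, theta_nil hΘ⟩

theorem gamma_le_card [Fintype A] (Θ : List A → List A) (w : List A) :
    gammaTheta Θ w ≤ Fintype.card A := by
  unfold gammaTheta
  have hsub : {P : Set A | ∃ a, a ∈ w ∧ Θ [a] ≠ [a] ∧ P = {b | [b] = [a] ∨ [b] = Θ [a]}}
      ⊆ (fun a : A => {b | [b] = [a] ∨ [b] = Θ [a]}) '' Set.univ := by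
    rintro P ⟨a, _, _, rfl⟩
    exact ⟨a, Set.mem_univ a, rfl⟩
  calc Set.ncard _ ≤ _ := Set.ncard_le_ncard hsub (Set.Finite.image _ (Set.finite_univ))
    _ ≤ Set.ncard (Set.univ : Set A) := Set.ncard_image_le Set.finite_univ
    _ = Fintype.card A := Set.ncard_univ A ▸ (Set.ncard_univ A).symm ▸ by
        rw [Set.ncard_univ, Nat.card_eq_fintype_card]

/-- `j` is a good position: the prefix of length `j` has a nonempty `Θ`-palindromic
suffix occurring exactly once in it. -/
def GoodPos (Θ : List A → List A) (u : ℕ → A) (j : ℕ) : Prop :=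
  ∃ q : List A, Θ q = q ∧ q ≠ [] ∧ q <:+ prefixWord u j ∧
    {i | OccursIn q (prefixWord u j) i}.ncard = 1

theorem infix_prefixWord_iff {u : ℕ → A} {q : List A} {n : ℕ} :
    q <:+: prefixWord u n ↔ ∃ i, OccursIn q (prefixWord u n) i := by
  constructor
  · rintro ⟨x, y, hxy⟩
    refine ⟨x.length, ?_, ?_⟩
    · have := congrArg List.length hxy
      simp [prefixWord, factorAt_length] at this
      simp [prefixWord, factorAt_length]; omega
    · rw [← hxy, List.append_assoc, List.drop_left, List.take_left]
  · rintro ⟨i, h1, h2⟩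
    rw [h2]
    exact (List.take_prefix _ _).isInfix.trans (List.drop_suffix _ _).isInfix

theorem occursAt_of_prefix {u : ℕ → A} {q q' : List A} {i : ℕ}
    (hp : q <+: q') (h : OccursAt u q' i) : OccursAt u q i := by
  rw [occursAt_iff] at h ⊢
  intro k hk
  rw [hp.getElem hk]
  exact h k (by have := hp.length_le; omega)

theorem occursAt_of_suffix {u : ℕ → A} {q q' : List A} {i : ℕ}
    (hp : q <:+ q') (h : OccursAt u q' i) : OccursAt u q (i + (q'.length - q.length)) := by
  rw [occursAt_iff] at h ⊢
  obtain ⟨x, hx⟩ := hp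
  have hxl : x.length = q'.length - q.length := by
    have := congrArg List.length hx; simp at this; omega
  intro k hk
  have h1 : q[k] = q'[x.length + k]'(by subst hx; simp; omega) := by
    subst hx
    rw [List.getElem_append_right (by omega)]
    congr 1; omega
  rw [h1, h (x.length + k) (by subst hx; simp; omega)]
  congr 1; omega

theorem pal_ncard_le_good (Θ : List A → List A) (hΘ : IsAntimorphism Θ) (u : ℕ → A) (n : ℕ) :
    (palSet Θ (prefixWord u n) \ {([] : List A)}).ncard ≤
      {j | 1 ≤ j ∧ j ≤ n ∧ GoodPos Θ u j}.ncard := by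
  classical
  set S := palSet Θ (prefixWord u n) \ {([] : List A)} with hS
  set f : List A → ℕ := fun q => sInf {i | OccursAt u q i} + q.length with hf
  -- basic facts about elements of S
  have hmemS : ∀ q ∈ S, Θ q = q ∧ q ≠ [] ∧ ∃ i, OccursIn q (prefixWord u n) i := by
    rintro q ⟨⟨hinf, hpal⟩, hne⟩
    exact ⟨hpal, by simpa using hne, infix_prefixWord_iff.mp hinf⟩
  have hiq : ∀ q ∈ S, OccursAt u q (sInf {i | OccursAt u q i}) ∧
      sInf {i | OccursAt u q i} + q.length ≤ n := by
    intro q hq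
    obtain ⟨_, _, i, hocc⟩ := hmemS q hq
    rw [occursIn_prefixWord_iff] at hocc
    have hne : {i | OccursAt u q i}.Nonempty := ⟨i, hocc.2⟩
    have hmem := Nat.sInf_mem hne
    have hle : sInf {i | OccursAt u q i} ≤ i := Nat.sInf_le hocc.2
    exact ⟨hmem, by omega⟩
  -- each q in S is a suffix of the prefix of length f q, and occurs exactly once there
  have hsuf : ∀ q ∈ S, q <:+ prefixWord u (f q) := by
    intro q hq
    obtain ⟨hocc, _⟩ := hiq q hq
    exact suffix_prefixWord_iff.mpr ⟨by simp [hf], by simpa [hf] using hocc⟩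
  have hsingle : ∀ q ∈ S, {i | OccursIn q (prefixWord u (f q)) i} = {sInf {i | OccursAt u q i}} := by
    intro q hq
    obtain ⟨hocc, hb⟩ := hiq q hq
    ext i'
    simp only [Set.mem_setOf_eq, Set.mem_singleton_iff, occursIn_prefixWord_iff]
    constructor
    · rintro ⟨h1, h2⟩
      have := Nat.sInf_le (show i' ∈ {i | OccursAt u q i} from h2)
      simp [hf] at h1
      omega
    · rintro rfl
      exact ⟨by simp [hf], hocc⟩
  -- f is injective on S
  have hlenS : ∀ q ∈ S, 1 ≤ q.length := by
    intro q hq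
    obtain ⟨_, hne, _⟩ := hmemS q hq
    have := List.length_pos_iff.mpr hne
    omega
  have key : ∀ q ∈ S, ∀ q' ∈ S, f q = f q' → q.length < q'.length → False := by
    intro q hq q' hq' hfe hlt
    obtain ⟨hpal, hne, _⟩ := hmemS q hq
    obtain ⟨hpal', hne', _⟩ := hmemS q' hq'
    have h1 : q <:+ prefixWord u (f q') := hfe ▸ hsuf q hq
    have h2 := hsuf q' hq'
    have hqq' : q <:+ q' := List.suffix_of_suffix_length_le h1 h2 (le_of_lt hlt)
    have hpre : q <+: q' := pal_suffix_prefix hΘ hpal hpal' hqq'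
    obtain ⟨hocc', hb'⟩ := hiq q' hq'
    have hoccq : OccursAt u q (sInf {i | OccursAt u q' i}) := occursAt_of_prefix hpre hocc'
    have := Nat.sInf_le (show sInf {i | OccursAt u q' i} ∈ {i | OccursAt u q i} from hoccq)
    simp only [hf] at hfe
    omega
  have hinj : Set.InjOn f S := by
    intro q hq q' hq' hfe
    by_contra hne
    rcases lt_trichotomy q.length q'.length with h | h | h
    · exact key q hq q' hq' hfe h
    · have h1 : q <:+ prefixWord u (f q') := hfe ▸ hsuf q hq
      have h2 := hsuf q' hq'
      exact hne ((List.suffix_of_suffix_length_le h1 h2 (le_of_eq h)).sublist.antisymm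
        (List.suffix_of_suffix_length_le h2 h1 (le_of_eq h.symm)).sublist)
    · exact key q' hq' q hq hfe.symm h
  -- f maps S into the good set
  have hmaps : f '' S ⊆ {j | 1 ≤ j ∧ j ≤ n ∧ GoodPos Θ u j} := by
    rintro j ⟨q, hq, rfl⟩
    obtain ⟨hpal, hne, _⟩ := hmemS q hq
    obtain ⟨_, hb⟩ := hiq q hq
    refine ⟨by have := hlenS q hq; simp [hf]; omega, by simpa [hf] using hb, ?_⟩
    exact ⟨q, hpal, hne, hsuf q hq, by rw [hsingle q hq]; exact Set.ncard_singleton _⟩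
  have hfin : {j | 1 ≤ j ∧ j ≤ n ∧ GoodPos Θ u j}.Finite :=
    Set.Finite.subset (Set.finite_Icc 1 n) (fun j hj => ⟨hj.1, hj.2.1⟩)
  calc S.ncard = (f '' S).ncard := (Set.ncard_image_of_injOn hinj).symm
    _ ≤ _ := Set.ncard_le_ncard hmaps hfin

theorem badPos_finite [Fintype A] (Θ : List A → List A) (hΘ : IsAntimorphism Θ)
    (u : ℕ → A) (hdef : FiniteDefect Θ u) :
    {j : ℕ | 1 ≤ j ∧ ¬ GoodPos Θ u j}.Finite := by
  obtain ⟨C, hC⟩ := hdef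
  apply finite_of_bounded_ncard _ (C + Fintype.card A).toNat
  intro n
  set Bn := {j : ℕ | 1 ≤ j ∧ ¬ GoodPos Θ u j} ∩ Set.Iic n with hBn
  set Gn := {j : ℕ | 1 ≤ j ∧ j ≤ n ∧ GoodPos Θ u j} with hGn
  have hBfin : Bn.Finite := Set.Finite.subset (Set.finite_Iic n) Set.inter_subset_right
  have hGfin : Gn.Finite := Set.Finite.subset (Set.finite_Icc 1 n) (fun j hj => ⟨hj.1, hj.2.1⟩)
  have hdisj : Disjoint Bn Gn := by
    rw [Set.disjoint_left]
    rintro j ⟨⟨_, hbad⟩, _⟩ ⟨_, _, hgood⟩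
    exact hbad hgood
  have hunion : Bn ∪ Gn = Set.Icc 1 n := by
    ext j
    simp only [hBn, hGn, Set.mem_union, Set.mem_inter_iff, Set.mem_setOf_eq, Set.mem_Iic,
      Set.mem_Icc]
    by_cases h : GoodPos Θ u j <;> constructor <;> intro <;> simp_all
  have hcard : Bn.ncard + Gn.ncard = n := by
    rw [← Set.ncard_union_eq hdisj hBfin hGfin, hunion]
    rw [show Set.Icc 1 n = ↑(Finset.Icc 1 n) by simp, Set.ncard_coe_finset, Nat.card_Icc]
    omega
  -- defect bound for the prefix of length n
  have hdefn := hC (prefixWord u n) (prefixWord_factor u n)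
  unfold defect at hdefn
  rw [show (prefixWord u n).length = n from factorAt_length u 0 n] at hdefn
  have hγ : gammaTheta Θ (prefixWord u n) ≤ Fintype.card A := gamma_le_card Θ _
  have hP : (palSet Θ (prefixWord u n) \ {([] : List A)}).ncard + 1
      = (palSet Θ (prefixWord u n)).ncard :=
    Set.ncard_diff_singleton_add_one (nil_mem_palSet hΘ _) (palSet_finite Θ _)
  have hPG : (palSet Θ (prefixWord u n) \ {([] : List A)}).ncard ≤ Gn.ncard :=
    pal_ncard_le_good Θ hΘ u n
  -- combine
  have hPG' : (palSet Θ (prefixWord u n)).ncard ≤ Gn.ncard + 1 := by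
    rw [← hP]; omega
  have hZ : (Bn.ncard : ℤ) ≤ C + Fintype.card A := by
    have h1 : ((palSet Θ (prefixWord u n)).ncard : ℤ) ≤ (Gn.ncard : ℤ) + 1 := by
      exact_mod_cast hPG'
    have h2 : (Bn.ncard : ℤ) + (Gn.ncard : ℤ) = (n : ℤ) := by exact_mod_cast hcard
    have h3 : (gammaTheta Θ (prefixWord u n) : ℤ) ≤ (Fintype.card A : ℤ) := by
      exact_mod_cast hγ
    omega
  omega

end Basic

/-- **Lemma 5.** The language of a recurrent infinite word with finite
`Θ`-defect is closed under `Θ`. -/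
theorem lang_closed_of_recurrent_finite_defect
    {A : Type*} [Fintype A] (Θ : List A → List A) (hΘ : IsAntimorphism Θ)
    (u : ℕ → A) (hrec : Recurrent u) (hdef : FiniteDefect Θ u) :
    ∀ w, IsFactorOf w u → IsFactorOf (Θ w) u := by
  intro w hw
  by_cases hwnil : w = []
  · subst hwnil
    rw [theta_nil hΘ]
    exact ⟨0, by simp [OccursAt, factorAt]⟩
  have hwpos : 1 ≤ w.length := List.length_pos_iff.mpr hwnil
  -- the set of bad positions is finite, hence bounded
  obtain ⟨M, hM⟩ := (badPos_finite Θ hΘ u hdef).bddAbove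
  -- a first occurrence of w, and a much later one
  obtain ⟨i₀, hocc₀⟩ := id hw
  obtain ⟨i, hiM, hocc⟩ := hrec w hw (max (M + 1) (i₀ + 1))
  have hiM' : M + 1 ≤ i := le_trans (le_max_left _ _) hiM
  have hi₀ : i₀ + 1 ≤ i := le_trans (le_max_right _ _) hiM
  set j := i + w.length with hj
  have hgood : GoodPos Θ u j := by
    by_contra hbadj
    have : j ≤ M := hM ⟨by omega, hbadj⟩
    omega
  obtain ⟨q, hqpal, hqne, hqsuf, hquni⟩ := hgood
  have hqpos : 1 ≤ q.length := List.length_pos_iff.mpr hqne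
  obtain ⟨hql, hqocc⟩ := suffix_prefixWord_iff.mp hqsuf
  have hwsuf : w <:+ prefixWord u j :=
    suffix_prefixWord_iff.mpr ⟨by omega, by rw [show j - w.length = i by omega]; exact hocc⟩
  by_cases hlen : q.length ≤ w.length
  · -- q would occur twice in the prefix of length j: contradiction
    exfalso
    have hqw : q <:+ w := List.suffix_of_suffix_length_le hqsuf hwsuf hlen
    have h1 : OccursIn q (prefixWord u j) (j - q.length) :=
      occursIn_prefixWord_iff.mpr ⟨by omega, hqocc⟩
    have hq₀ : OccursAt u q (i₀ + (w.length - q.length)) := occursAt_of_suffix hqw hocc₀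
    have h2 : OccursIn q (prefixWord u j) (i₀ + (w.length - q.length)) :=
      occursIn_prefixWord_iff.mpr ⟨by omega, hq₀⟩
    obtain ⟨x, hx⟩ := Set.ncard_eq_one.mp hquni
    have e1 : j - q.length = x := by
      have : (j - q.length) ∈ ({x} : Set ℕ) := hx ▸ h1
      simpa using this
    have e2 : i₀ + (w.length - q.length) = x := by
      have : (i₀ + (w.length - q.length)) ∈ ({x} : Set ℕ) := hx ▸ h2
      simpa using this
    omega
  · -- w is an infix of the Θ-palindrome q, hence Θ w is an infix of q
    push_neg at hlen
    have hwin : w <:+: q := by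
      rw [show w = factorAt u i w.length from hocc,
        show q = factorAt u (j - q.length) q.length from hqocc]
      exact factorAt_infix u (by omega) (by omega)
    have hΘw : Θ w <:+: q := hqpal ▸ theta_infix hΘ hwin
    exact factorOf_infix (hΘw.trans hqsuf.isInfix) (prefixWord_factor u j)
end
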